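/- arXiv:2505.21217 — 3 statements merged into one kernel-verified Lean document; each statement's English description precedes it below -/
import Mathlib

section
/- For every Borel set E ⊆ ℝ^d, the upper correlation dimension satisfies ucod E = sup{ s ≥ 0 : there exist μ ∈ 𝒫(E) and a sequence r_k decreasing to 0 such that μ(B(x,r_k)) ≤ r_k^s for all x ∈ ℝ^d and all k ∈ ℕ }. -/
open MeasureTheory Metric Filter Set Topology

/-- The topological support of a measure: points all of whose neighbourhoods
have positive measure. -/
def msupport {X : Type*} [TopologicalSpace X] [MeasurableSpace X]
    (μ : Measure X) : Set X :=
  {x | ∀ U : Set X, IsOpen U → x ∈ U → μ U ≠ 0}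

/-- The collection of Borel probability measures whose support is contained in `E`. -/
def probOn {X : Type*} [TopologicalSpace X] [MeasurableSpace X]
    (E : Set X) : Set (Measure X) :=
  {μ | IsProbabilityMeasure μ ∧ msupport μ ⊆ E}

/-- The correlation integral `∫ μ(B(x,r)) dμ(x)` (as a real number). -/
noncomputable def corrInt {X : Type*} [MetricSpace X] [MeasurableSpace X]
    (μ : Measure X) (r : ℝ) : ℝ :=
  (∫⁻ x, μ (closedBall x r) ∂μ).toReal

/-- Lower correlation dimension of a measure. -/
noncomputable def lcod {X : Type*} [MetricSpace X] [MeasurableSpace X]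
    (μ : Measure X) : ℝ :=
  liminf (fun r : ℝ => Real.log (corrInt μ r) / Real.log r) (𝓝[>] 0)

/-- Upper correlation dimension of a measure. -/
noncomputable def ucod {X : Type*} [MetricSpace X] [MeasurableSpace X]
    (μ : Measure X) : ℝ :=
  limsup (fun r : ℝ => Real.log (corrInt μ r) / Real.log r) (𝓝[>] 0)

/-- Upper correlation dimension of a set. -/
noncomputable def ucodSet {X : Type*} [MetricSpace X] [MeasurableSpace X]
    (E : Set X) : ℝ :=
  sSup (ucod '' probOn E)

/-- `coverNum E r` is the least number of sets of diameter at most `r` needed to cover `E`. -/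
noncomputable def coverNum {X : Type*} [MetricSpace X] (E : Set X) (r : ℝ) : ℕ :=
  sInf {n : ℕ | ∃ 𝒰 : Finset (Set X), 𝒰.card = n ∧
    (∀ U ∈ 𝒰, EMetric.diam U ≤ ENNReal.ofReal r) ∧ E ⊆ ⋃ U ∈ 𝒰, U}

/-- Lower box-counting dimension. -/
noncomputable def lbd {X : Type*} [MetricSpace X] (E : Set X) : ℝ :=
  liminf (fun r : ℝ => Real.log (coverNum E r : ℝ) / (-Real.log r)) (𝓝[>] 0)

/-- Upper box-counting dimension. -/
noncomputable def ubd {X : Type*} [MetricSpace X] (E : Set X) : ℝ :=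
  limsup (fun r : ℝ => Real.log (coverNum E r : ℝ) / (-Real.log r)) (𝓝[>] 0)

/-- Modified lower box dimension. -/
noncomputable def mlbd {X : Type*} [MetricSpace X] (E : Set X) : ℝ :=
  sInf {s : ℝ | ∃ F : ℕ → Set X, (∀ i, IsCompact (F i)) ∧ E ⊆ ⋃ i, F i ∧
    ∀ i, lbd (F i) ≤ s}

/-- Modified upper box dimension (= packing dimension). -/
noncomputable def mubd {X : Type*} [MetricSpace X] (E : Set X) : ℝ :=
  sInf {s : ℝ | ∃ F : ℕ → Set X, (∀ i, IsCompact (F i)) ∧ E ⊆ ⋃ i, F i ∧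
    ∀ i, ubd (F i) ≤ s}

/-- Fourier transform of a measure on Euclidean space. -/
noncomputable def ftMeas {d : ℕ} (μ : Measure (EuclideanSpace ℝ (Fin d)))
    (z : EuclideanSpace ℝ (Fin d)) : ℂ :=
  ∫ x, Complex.exp (Complex.I * (inner ℝ x z : ℝ)) ∂μ

/-!
If `μ (closedBall x (r k)) ≤ r k ^ s` for all `x`, the correlation integral at `r k` is at most
`r k ^ s`, so `s ≤ ucod μ`. Conversely, given `s < s₁ < s₂ < ucod μ`, pick scales `ρ k → 0` at
which the correlation integral is below `ρ k ^ s₂`. By Markov's inequality the points `x` with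
`μ (closedBall x (ρ k)) ≥ ρ k ^ s₁` have measure at most `ρ k ^ (s₂ - s₁)`, and sparse enough
scales make these bounds sum to at most `1/2`. Normalising `μ` restricted to the complement `G`
of all these bad sets gives `ν ≪ μ` (so `ν` is still supported in `E`) with
`ν (closedBall x (ρ k / 2)) ≤ 2 ρ k ^ s₁`, since a ball of radius `ρ k / 2` meeting `G` lies in
a good ball of radius `ρ k`.

Both sets are bounded above (so `sSup` is not a junk value) because in a finite-dimensional space
the correlation integral at `r` is at least `c r ^ (2 n)`: by Fubini against Haar measure some
ball `B(x, r / 2)` has mass `≳ r ^ n`, and the integral is at least `μ (B(x, r / 2)) ^ 2`.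
-/

open scoped ENNReal

theorem csSup_eq_csSup_of_forall_exists_lt {α : Type*} [ConditionallyCompleteLinearOrder α]
    [NoMinOrder α] {s t : Set α} (hs : BddAbove s) (hst : ∀ x ∈ s, ∀ y < x, ∃ z ∈ t, y < z)
    (hts : ∀ z ∈ t, ∃ x ∈ s, z ≤ x) : sSup s = sSup t := by
  rcases s.eq_empty_or_nonempty with rfl | ⟨x, hx⟩
  · have : t = ∅ := eq_empty_of_forall_notMem fun z hz => by simpa using hts z hz
    rw [this]
  obtain ⟨z, hz, -⟩ := hst x hx _ (exists_lt x).choose_spec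
  obtain ⟨b, hb⟩ := hs
  have ht : BddAbove t := ⟨b, fun z hz => (hts z hz).elim fun x ⟨hx, hzx⟩ => hzx.trans (hb hx)⟩
  refine le_antisymm (csSup_le ⟨x, hx⟩ fun x hx => le_of_forall_lt fun y hy => ?_)
    (csSup_le ⟨z, hz⟩ fun z hz => ?_)
  · obtain ⟨z, hz, hyz⟩ := hst x hx y hy
    exact hyz.trans_le (le_csSup ht hz)
  · obtain ⟨x, hx, hzx⟩ := hts z hz
    exact hzx.trans (le_csSup ⟨b, hb⟩ hx)

theorem tendsto_rpow_nhdsGT_zero {e : ℝ} (he : 0 < e) :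
    Tendsto (fun r : ℝ => r ^ e) (𝓝[>] 0) (𝓝 0) := by
  simpa [Real.zero_rpow he.ne'] using
    ((Real.continuous_rpow_const he.le).tendsto 0).mono_left nhdsWithin_le_nhds

theorem eventually_two_mul_rpow_le_half_rpow {s t : ℝ} (hst : s < t) :
    ∀ᶠ r : ℝ in 𝓝[>] 0, 2 * r ^ t ≤ (r / 2) ^ s := by
  have hsmall : ∀ᶠ r : ℝ in 𝓝[>] 0, r ^ (t - s) ≤ 2⁻¹ * (2 : ℝ)⁻¹ ^ s :=
    (tendsto_rpow_nhdsGT_zero (sub_pos.2 hst)).eventually (ge_mem_nhds (by positivity))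
  filter_upwards [hsmall, self_mem_nhdsWithin] with r hr (hr₀ : 0 < r)
  rw [div_eq_mul_inv, Real.mul_rpow hr₀.le (by norm_num),
    ← sub_add_cancel t s, Real.rpow_add hr₀]
  calc 2 * (r ^ (t - s) * r ^ s) ≤ 2 * (2⁻¹ * (2 : ℝ)⁻¹ ^ s * r ^ s) := by gcongr
    _ = r ^ s * 2⁻¹ ^ s := by ring

theorem exists_seq_strictAnti_tendsto_zero_of_frequently {p : ℝ → Prop} {q : ℕ → ℝ → Prop}
    (hp : ∃ᶠ r in 𝓝[>] 0, p r) (hq : ∀ k, ∀ᶠ r in 𝓝[>] 0, q k r) :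
    ∃ ρ : ℕ → ℝ, StrictAnti ρ ∧ (∀ k, 0 < ρ k) ∧ Tendsto ρ atTop (𝓝 0) ∧
      ∀ k, p (ρ k) ∧ q k (ρ k) := by
  have step (k : ℕ) (ε : {ε : ℝ // 0 < ε}) :
      ∃ r : {r : ℝ // 0 < r}, r.1 < min ε.1 (1 / (k + 1)) ∧ p r ∧ q k r := by
    obtain ⟨r, hpr, hqr, hr⟩ := (hp.and_eventually
      ((hq k).and (Ioo_mem_nhdsGT (lt_min ε.2 Nat.one_div_pos_of_nat)))).exists
    exact ⟨⟨r, hr.1⟩, hr.2, hpr, hqr⟩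
  choose f hf using step
  let ρ : ℕ → {r : ℝ // 0 < r} := fun k => Nat.rec (f 0 ⟨1, one_pos⟩) (fun k r => f (k + 1) r) k
  have hρ (k : ℕ) : ∃ ε, ρ k = f k ε := by cases k <;> exact ⟨_, rfl⟩
  have hρk (k : ℕ) : (ρ k).1 < 1 / (k + 1) ∧ p (ρ k).1 ∧ q k (ρ k).1 := by
    obtain ⟨ε, hε⟩ := hρ k
    obtain ⟨hlt, hpk, hqk⟩ := hf k ε
    exact ⟨hε ▸ hlt.trans_le (min_le_right _ _), hε ▸ hpk, hε ▸ hqk⟩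
  refine ⟨fun k => (ρ k).1, strictAnti_nat_of_succ_lt fun k => ?_, fun k => (ρ k).2, ?_,
    fun k => (hρk k).2⟩
  · exact ((hf (k + 1) (ρ k)).1).trans_le (min_le_left _ _)
  · exact tendsto_of_tendsto_of_tendsto_of_le_of_le tendsto_const_nhds
      tendsto_one_div_add_atTop_nhds_zero_nat (fun k => (ρ k).2.le) fun k => (hρk k).1.le

theorem msupport_mono_of_absolutelyContinuous {X : Type*} [TopologicalSpace X]
    [MeasurableSpace X] {μ ν : Measure X} (h : ν ≪ μ) : msupport ν ⊆ msupport μ :=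
  fun _ hx U hU hxU hμU => hx U hU hxU (h hμU)

section CorrelationIntegral

variable {X : Type*} [MetricSpace X] [MeasurableSpace X]

def HasFrostmanSeq (μ : Measure X) (s : ℝ) : Prop :=
  ∃ r : ℕ → ℝ, StrictAnti r ∧ (∀ k, 0 < r k) ∧ Tendsto r atTop (𝓝 0) ∧
    ∀ (x : X) (k : ℕ), μ (closedBall x (r k)) ≤ ENNReal.ofReal (r k ^ s)

noncomputable def corrRatio (μ : Measure X) (r : ℝ) : ℝ :=
  Real.log (corrInt μ r) / Real.log r

theorem corrInt_nonneg (μ : Measure X) (r : ℝ) : 0 ≤ corrInt μ r :=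
  ENNReal.toReal_nonneg

theorem corrRatio_le_of_pow_le_corrInt {μ : Measure X} {r : ℝ} {a : ℕ} (hr₀ : 0 < r) (hr₁ : r < 1)
    (h : r ^ a ≤ corrInt μ r) : corrRatio μ r ≤ a := by
  rw [corrRatio, div_le_iff_of_neg (Real.log_neg hr₀ hr₁), ← Real.log_pow]
  exact Real.log_le_log (by positivity) h

theorem le_corrRatio_of_corrInt_le_rpow {μ : Measure X} {r s : ℝ} (hr₀ : 0 < r) (hr₁ : r < 1)
    (hpos : 0 < corrInt μ r) (h : corrInt μ r ≤ r ^ s) : s ≤ corrRatio μ r := by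
  rw [corrRatio, le_div_iff_of_neg (Real.log_neg hr₀ hr₁), ← Real.log_rpow hr₀]
  exact Real.log_le_log hpos h

theorem eventually_corrRatio_le {μ : Measure X} {a : ℕ}
    (hlow : ∀ᶠ r in 𝓝[>] 0, r ^ a ≤ corrInt μ r) :
    ∀ᶠ r in 𝓝[>] 0, corrRatio μ r ≤ a := by
  filter_upwards [hlow, Ioo_mem_nhdsGT one_pos] with r hr hr'
  exact corrRatio_le_of_pow_le_corrInt hr'.1 hr'.2 hr

variable (μ : Measure X) [IsProbabilityMeasure μ]

theorem hasFrostmanSeq_zero : HasFrostmanSeq μ 0 := by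
  obtain ⟨r, hanti, hr₀, hr⟩ := exists_seq_strictAnti_tendsto (0 : ℝ)
  exact ⟨r, hanti, hr₀, hr, fun _ _ => by simp [prob_le_one]⟩

theorem lintegral_measure_closedBall_le_one (r : ℝ) : ∫⁻ x, μ (closedBall x r) ∂μ ≤ 1 :=
  (lintegral_mono fun _ => prob_le_one).trans_eq (by simp)

theorem lintegral_measure_closedBall_ne_top (r : ℝ) : ∫⁻ x, μ (closedBall x r) ∂μ ≠ ∞ :=
  ((lintegral_measure_closedBall_le_one μ r).trans_lt ENNReal.one_lt_top).ne

theorem corrInt_le_one (r : ℝ) : corrInt μ r ≤ 1 :=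
  ENNReal.toReal_le_of_le_ofReal zero_le_one <| by
    simpa using lintegral_measure_closedBall_le_one μ r

theorem corrInt_le_of_forall_measure_closedBall_le {r t : ℝ} (ht : 0 ≤ t)
    (h : ∀ x, μ (closedBall x r) ≤ ENNReal.ofReal t) : corrInt μ r ≤ t :=
  ENNReal.toReal_le_of_le_ofReal ht <| (lintegral_mono h).trans_eq (by simp)

theorem corrRatio_nonneg {r : ℝ} (hr₀ : 0 < r) (hr₁ : r < 1) :
    0 ≤ corrRatio μ r :=
  div_nonneg_of_nonpos (Real.log_nonpos (corrInt_nonneg μ r) (corrInt_le_one μ r))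
    (Real.log_neg hr₀ hr₁).le

theorem isCoboundedUnder_le_corrRatio :
    IsCoboundedUnder (· ≤ ·) (𝓝[>] 0) (corrRatio μ) :=
  IsBoundedUnder.isCoboundedUnder_le ⟨0, eventually_map.2 <| by
    filter_upwards [Ioo_mem_nhdsGT one_pos] with r hr using corrRatio_nonneg μ hr.1 hr.2⟩

theorem lintegral_measure_closedBall_lt_of_lt_corrRatio {r t : ℝ} (hr₀ : 0 < r) (hr₁ : r < 1)
    (h : t < corrRatio μ r) :
    ∫⁻ x, μ (closedBall x r) ∂μ < ENNReal.ofReal (r ^ t) := by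
  rw [ENNReal.lt_ofReal_iff_toReal_lt (lintegral_measure_closedBall_ne_top μ r), ← corrInt]
  rw [corrRatio, lt_div_iff_of_neg (Real.log_neg hr₀ hr₁), ← Real.log_rpow hr₀] at h
  rcases (corrInt_nonneg μ r).eq_or_lt with h0 | hpos
  · rw [← h0]; positivity
  · exact (Real.log_lt_log_iff hpos (by positivity)).1 h

theorem ucod_le {a : ℕ} (hlow : ∀ᶠ r in 𝓝[>] 0, r ^ a ≤ corrInt μ r) : ucod μ ≤ a :=
  limsup_le_of_le (isCoboundedUnder_le_corrRatio μ) (eventually_corrRatio_le hlow)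

theorem le_ucod_of_hasFrostmanSeq {a : ℕ} (hlow : ∀ᶠ r in 𝓝[>] 0, r ^ a ≤ corrInt μ r)
    {s : ℝ} (h : HasFrostmanSeq μ s) : s ≤ ucod μ := by
  obtain ⟨r, -, hr₀, hr, hball⟩ := h
  have hr' : Tendsto r atTop (𝓝[>] 0) :=
    tendsto_nhdsWithin_iff.2 ⟨hr, Eventually.of_forall hr₀⟩
  refine le_limsup_of_frequently_le (hr'.frequently (Eventually.frequently ?_))
    ⟨a, eventually_map.2 (eventually_corrRatio_le hlow)⟩
  filter_upwards [hr'.eventually hlow, hr'.eventually (Ioo_mem_nhdsGT one_pos)]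
    with k hk hk'
  have hcorr : corrInt μ (r k) ≤ r k ^ s :=
    corrInt_le_of_forall_measure_closedBall_le μ (Real.rpow_nonneg (hr₀ k).le s) (hball · k)
  exact le_corrRatio_of_corrInt_le_rpow hk'.1 hk'.2 ((pow_pos hk'.1 a).trans_le hk) hcorr

end CorrelationIntegral

section Measurability

variable {X : Type*} [MetricSpace X] [MeasurableSpace X] [OpensMeasurableSpace X]
  [SecondCountableTopology X]

theorem measurableSet_dist_le (r : ℝ) : MeasurableSet {p : X × X | dist p.1 p.2 ≤ r} :=
  (isClosed_le continuous_dist continuous_const).measurableSet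

theorem measurable_measure_closedBall (μ : Measure X) [SFinite μ] (r : ℝ) :
    Measurable fun x => μ (closedBall x r) := by
  convert measurable_measure_prodMk_left (ν := μ) (measurableSet_dist_le r) using 3
  ext; simp [dist_comm]

theorem lintegral_measure_closedBall_comm (μ ν : Measure X) [SFinite μ] [SFinite ν] (r : ℝ) :
    ∫⁻ x, ν (closedBall x r) ∂μ = ∫⁻ y, μ (closedBall y r) ∂ν := by
  have h := (Measure.prod_apply (μ := μ) (ν := ν) (measurableSet_dist_le r)).symm.trans
    (Measure.prod_apply_symm (measurableSet_dist_le r))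
  have hx (x : X) : Prod.mk x ⁻¹' {p : X × X | dist p.1 p.2 ≤ r} = closedBall x r := by
    ext; simp [dist_comm]
  have hy (y : X) : (·, y) ⁻¹' {p : X × X | dist p.1 p.2 ≤ r} = closedBall y r := by
    ext; simp
  simpa only [hx, hy] using h

theorem measure_closedBall_mul_self_le_lintegral (μ : Measure X) [SFinite μ] (x : X) (r : ℝ) :
    μ (closedBall x r) * μ (closedBall x r) ≤ ∫⁻ y, μ (closedBall y (2 * r)) ∂μ :=
  calc μ (closedBall x r) * μ (closedBall x r)
      = ∫⁻ _ in closedBall x r, μ (closedBall x r) ∂μ := by rw [setLIntegral_const]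
    _ ≤ ∫⁻ y in closedBall x r, μ (closedBall y (2 * r)) ∂μ :=
      setLIntegral_mono (measurable_measure_closedBall μ _) fun y hy =>
        measure_mono <| closedBall_subset_closedBall' <| by
          rw [mem_closedBall, dist_comm] at hy; linarith
    _ ≤ ∫⁻ y, μ (closedBall y (2 * r)) ∂μ := setLIntegral_le_lintegral _ _

end Measurability

section Restriction

variable {X : Type*} [MetricSpace X] [MeasurableSpace X] [OpensMeasurableSpace X]
  (μ : Measure X) [IsProbabilityMeasure μ]

theorem exists_absolutelyContinuous_measure_closedBall_half_le {ρ : ℕ → ℝ} {t : ℕ → ℝ≥0∞}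
    (h : ∑' k, μ {x | t k ≤ μ (closedBall x (ρ k))} ≤ 2⁻¹) :
    ∃ ν : Measure X, IsProbabilityMeasure ν ∧ ν ≪ μ ∧
      ∀ x k, ν (closedBall x (ρ k / 2)) ≤ 2 * t k := by
  set G := ⋂ k, {x | μ (closedBall x (ρ k)) < t k}
  have hGc : μ Gᶜ ≤ 2⁻¹ := by
    simp_rw [G, compl_iInter, compl_ofPred, not_lt]
    exact (measure_iUnion_le _).trans h
  have hG : 2⁻¹ ≤ μ G := by
    rw [← ENNReal.one_sub_inv_two, tsub_le_iff_right]
    calc 1 = μ (G ∪ Gᶜ) := by simp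
      _ ≤ μ G + μ Gᶜ := measure_union_le _ _
      _ ≤ μ G + 2⁻¹ := by gcongr
  have hG₀ : μ G ≠ 0 := (lt_of_lt_of_le (by norm_num) hG).ne'
  refine ⟨(μ G)⁻¹ • μ.restrict G, ⟨?_⟩,
    (Measure.absolutelyContinuous_of_le Measure.restrict_le_self).smul_left _, fun x k => ?_⟩
  · simp [ENNReal.inv_mul_cancel hG₀ (measure_ne_top _ _)]
  rw [Measure.smul_apply, smul_eq_mul, Measure.restrict_apply measurableSet_closedBall]
  rcases (closedBall x (ρ k / 2) ∩ G).eq_empty_or_nonempty with h0 | ⟨y, hyx, hyG⟩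
  · simp [h0]
  have hsub : closedBall x (ρ k / 2) ⊆ closedBall y (ρ k) :=
    closedBall_subset_closedBall' (by rw [mem_closedBall, dist_comm] at hyx; linarith)
  gcongr
  · exact ENNReal.inv_le_iff_inv_le.2 hG
  · exact (measure_mono (inter_subset_left.trans hsub)).trans (mem_iInter.1 hyG k).le

end Restriction

theorem exists_hasFrostmanSeq_of_lt_ucod {X : Type*} [MetricSpace X] [MeasurableSpace X]
    [OpensMeasurableSpace X] [SecondCountableTopology X] (μ : Measure X) [IsProbabilityMeasure μ]
    {s : ℝ} (hs : s < ucod μ) :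
    ∃ ν : Measure X, IsProbabilityMeasure ν ∧ ν ≪ μ ∧ HasFrostmanSeq ν s := by
  obtain ⟨s₁, hs₁, hs₁u⟩ := exists_between hs
  obtain ⟨s₂, hs₁₂, hs₂⟩ := exists_between hs₁u
  have hfreq : ∃ᶠ r in 𝓝[>] 0, ∫⁻ x, μ (closedBall x r) ∂μ < ENNReal.ofReal (r ^ s₂) :=
    ((frequently_lt_of_lt_limsup (isCoboundedUnder_le_corrRatio μ) hs₂).and_eventually
      (Ioo_mem_nhdsGT one_pos)).mono fun r ⟨h, hr⟩ =>
        lintegral_measure_closedBall_lt_of_lt_corrRatio μ hr.1 hr.2 h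
  obtain ⟨ε, hε₀, hε⟩ := ENNReal.exists_pos_sum_of_countable (ε := 2⁻¹) (by norm_num) ℕ
  have hsmall (k : ℕ) : ∀ᶠ r : ℝ in 𝓝[>] 0, r ^ (s₂ - s₁) ≤ ε k ∧ 2 * r ^ s₁ ≤ (r / 2) ^ s :=
    ((tendsto_rpow_nhdsGT_zero (sub_pos.2 hs₁₂)).eventually (ge_mem_nhds (hε₀ k))).and
      (eventually_two_mul_rpow_le_half_rpow hs₁)
  obtain ⟨ρ, hanti, hρ₀, hρ, hρk⟩ := exists_seq_strictAnti_tendsto_zero_of_frequently hfreq hsmall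
  have hmarkov (k : ℕ) : μ {x | ENNReal.ofReal (ρ k ^ s₁) ≤ μ (closedBall x (ρ k))} ≤ ε k := by
    have hpos : 0 < ρ k ^ s₁ := Real.rpow_pos_of_pos (hρ₀ k) _
    calc _ ≤ (∫⁻ x, μ (closedBall x (ρ k)) ∂μ) / ENNReal.ofReal (ρ k ^ s₁) :=
          meas_ge_le_lintegral_div (measurable_measure_closedBall μ _).aemeasurable
            (ENNReal.ofReal_pos.2 hpos).ne' ENNReal.ofReal_ne_top
      _ ≤ ENNReal.ofReal (ρ k ^ s₂) / ENNReal.ofReal (ρ k ^ s₁) :=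
          ENNReal.div_le_div_right (hρk k).1.le _
      _ = ENNReal.ofReal (ρ k ^ (s₂ - s₁)) := by
          rw [← ENNReal.ofReal_div_of_pos hpos, Real.rpow_sub (hρ₀ k)]
      _ ≤ ε k := ENNReal.ofReal_le_of_le_toReal (hρk k).2.1
  obtain ⟨ν, hν, hνμ, hball⟩ := exists_absolutelyContinuous_measure_closedBall_half_le μ
    ((ENNReal.tsum_le_tsum hmarkov).trans hε.le)
  refine ⟨ν, hν, hνμ, fun k => ρ k / 2, fun i j hij => div_lt_div_of_pos_right (hanti hij) two_pos,
    fun k => half_pos (hρ₀ k), by simpa using hρ.div_const 2, fun x k => (hball x k).trans ?_⟩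
  rw [← ENNReal.ofReal_ofNat 2, ← ENNReal.ofReal_mul zero_le_two]
  exact ENNReal.ofReal_le_ofReal (hρk k).2.2

section FiniteDimensional

variable {E : Type*} [NormedAddCommGroup E] [NormedSpace ℝ E] [FiniteDimensional ℝ E]
  [MeasurableSpace E] [BorelSpace E] (μ : Measure E) [IsProbabilityMeasure μ]

theorem exists_ofReal_mul_pow_le_measure_closedBall :
    ∃ c : ℝ, 0 < c ∧ ∀ r ∈ Ioc (0 : ℝ) 1,
      ∃ x, ENNReal.ofReal (c * r ^ Module.finrank ℝ E) ≤ μ (closedBall x r) := by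
  obtain ⟨R, hR⟩ : ∃ R : ℕ, μ (closedBall 0 R) ≠ 0 := by
    by_contra! h
    simpa [iUnion_closedBall_nat] using measure_iUnion_null h
  let vol : Measure E := Measure.addHaar
  set A := closedBall (0 : E) (R + 1)
  have hA₀ : vol A ≠ 0 := (measure_closedBall_pos _ _ (by positivity)).ne'
  have hA : vol A ≠ ∞ := measure_closedBall_lt_top.ne
  set C := vol (ball 0 1) * μ (closedBall 0 R) / vol A with hC_def
  have hC₀ : C ≠ 0 := ENNReal.div_ne_zero.2
    ⟨mul_ne_zero (measure_ball_pos _ _ one_pos).ne' hR, hA⟩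
  have hC : C ≠ ∞ := ENNReal.div_ne_top
    (ENNReal.mul_ne_top measure_ball_lt_top.ne (measure_ne_top _ _)) hA₀
  refine ⟨C.toReal, ENNReal.toReal_pos hC₀ hC, fun r hr => ?_⟩
  -- Some `x` beats the Haar average of `x ↦ μ (closedBall x r)` over `A`; Fubini bounds it below.
  have hint : ∫⁻ x in A, μ (closedBall x r) ∂vol ≤ vol A :=
    (lintegral_mono fun _ => prob_le_one).trans_eq (by simp)
  obtain ⟨x, -, hx⟩ := exists_setLAverage_le hA₀ measurableSet_closedBall.nullMeasurableSet
    (ne_top_of_le_ne_top hA hint)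
  refine ⟨x, le_trans ?_ hx⟩
  have hsub (y : E) (hy : y ∈ closedBall (0 : E) R) : closedBall y r ⊆ A := by
    refine closedBall_subset_closedBall' ?_
    rw [mem_closedBall] at hy
    linarith [hr.2]
  have hmass : ENNReal.ofReal (r ^ Module.finrank ℝ E) * vol (ball 0 1) * μ (closedBall 0 R) ≤
      ∫⁻ x in A, μ (closedBall x r) ∂vol :=
    calc ENNReal.ofReal (r ^ Module.finrank ℝ E) * vol (ball 0 1) * μ (closedBall 0 R)
        = ∫⁻ y in closedBall 0 R, vol (closedBall y r) ∂μ := by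
          simp_rw [Measure.addHaar_closedBall vol _ hr.1.le, setLIntegral_const]
      _ ≤ ∫⁻ y in closedBall 0 R, vol.restrict A (closedBall y r) ∂μ := by
          refine setLIntegral_mono (measurable_measure_closedBall _ r) fun y hy => ?_
          rw [Measure.restrict_apply measurableSet_closedBall, inter_eq_left.2 (hsub y hy)]
      _ ≤ ∫⁻ y, vol.restrict A (closedBall y r) ∂μ := setLIntegral_le_lintegral _ _
      _ = ∫⁻ x in A, μ (closedBall x r) ∂vol := lintegral_measure_closedBall_comm _ _ r
  rw [setLAverage_eq, ENNReal.ofReal_mul ENNReal.toReal_nonneg, ENNReal.ofReal_toReal hC,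
    hC_def, ← ENNReal.mul_div_right_comm]
  exact ENNReal.div_le_div_right ((by ring : _ = _).trans_le hmass) _

theorem eventually_pow_le_corrInt :
    ∀ᶠ r in 𝓝[>] 0, r ^ (2 * Module.finrank ℝ E + 1) ≤ corrInt μ r := by
  obtain ⟨c, hc, hball⟩ := exists_ofReal_mul_pow_le_measure_closedBall μ
  set n := Module.finrank ℝ E
  filter_upwards [Ioc_mem_nhdsGT (lt_min one_pos (by positivity : 0 < (c * 2⁻¹ ^ n) ^ 2))]
    with r ⟨hr₀, hr⟩
  obtain ⟨x, hx⟩ := hball (r / 2) ⟨by positivity, by linarith [(le_min_iff.1 hr).1]⟩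
  have hsq : ENNReal.ofReal ((c * (r / 2) ^ n) ^ 2) ≤ ∫⁻ y, μ (closedBall y r) ∂μ := by
    rw [sq, ENNReal.ofReal_mul (by positivity)]
    simpa [mul_div_cancel₀] using
      (mul_le_mul' hx hx).trans (measure_closedBall_mul_self_le_lintegral μ x (r / 2))
  calc r ^ (2 * n + 1) = r * r ^ (2 * n) := by ring
    _ ≤ (c * 2⁻¹ ^ n) ^ 2 * r ^ (2 * n) := by gcongr; exact (le_min_iff.1 hr).2
    _ = (c * (r / 2) ^ n) ^ 2 := by ring
    _ ≤ corrInt μ r :=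
      (ENNReal.ofReal_le_iff_le_toReal (lintegral_measure_closedBall_ne_top μ r)).1 hsq

end FiniteDimensional

theorem stmt1_general {d : ℕ} (E : Set (EuclideanSpace ℝ (Fin d))) :
    ucodSet E = sSup {s : ℝ | 0 ≤ s ∧ ∃ μ ∈ probOn E, ∃ r : ℕ → ℝ,
      StrictAnti r ∧ (∀ k, 0 < r k) ∧ Tendsto r atTop (𝓝 0) ∧
      ∀ (x : EuclideanSpace ℝ (Fin d)) (k : ℕ),
        μ (closedBall x (r k)) ≤ ENNReal.ofReal (r k ^ s)} := by
  have hbdd : BddAbove (ucod '' probOn E) := ⟨_, forall_mem_image.2 fun μ hμ =>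
    have := hμ.1; ucod_le μ (eventually_pow_le_corrInt μ)⟩
  refine csSup_eq_csSup_of_forall_exists_lt hbdd ?_ ?_
  · rintro _ ⟨μ, hμ, rfl⟩ c hc
    have := hμ.1
    rcases lt_or_ge c 0 with hc₀ | hc₀
    · exact ⟨0, ⟨le_rfl, μ, hμ, hasFrostmanSeq_zero μ⟩, hc₀⟩
    obtain ⟨t, hct, ht⟩ := exists_between hc
    obtain ⟨ν, hν, hνμ, hνt⟩ := exists_hasFrostmanSeq_of_lt_ucod μ ht
    exact ⟨t, ⟨hc₀.trans hct.le, ν, ⟨hν, (msupport_mono_of_absolutelyContinuous hνμ).trans hμ.2⟩,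
      hνt⟩, hct⟩
  · rintro s ⟨-, μ, hμ, hs⟩
    have := hμ.1
    exact ⟨ucod μ, mem_image_of_mem _ hμ,
      le_ucod_of_hasFrostmanSeq μ (eventually_pow_le_corrInt μ) hs⟩

theorem stmt1 {d : ℕ} (E : Set (EuclideanSpace ℝ (Fin d))) (hE : MeasurableSet E) :
    ucodSet E = sSup {s : ℝ | 0 ≤ s ∧ ∃ μ ∈ probOn E, ∃ r : ℕ → ℝ,
      StrictAnti r ∧ (∀ k, 0 < r k) ∧ Tendsto r atTop (𝓝 0) ∧
      ∀ (x : EuclideanSpace ℝ (Fin d)) (k : ℕ),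
        μ (closedBall x (r k)) ≤ ENNReal.ofReal (r k ^ s)} :=
  stmt1_general E
end

section
/- Let E ⊆ ℝ^d be bounded, nonempty and Borel. Then the lower box-counting dimension satisfies lbd E = liminf_{r→0} log( inf_{μ ∈ 𝒫(E)} ∫ μ(B(x,r)) dμ(x) ) / log r, and the upper box-counting dimension satisfies ubd E = limsup_{r→0} log( inf_{μ ∈ 𝒫(E)} ∫ μ(B(x,r)) dμ(x) ) / log r. -/
open MeasureTheory Metric Filter Set Topology

/-!
Write `N(r)` for `coverNum E r` and `I(r)` for the infimum of the correlation integrals over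
`𝒫(E)`. For `μ ∈ 𝒫(E)`, cutting a minimal cover of `E` into `N(r)` disjoint Borel pieces `Wᵢ` of
diameter `≤ r` gives `∫ μ(B(x,r)) dμ ≥ ∑ μ(Wᵢ)² ≥ 1 / N(r)` by Cauchy–Schwarz. Conversely, a
maximal `r`-separated subset `S ⊆ E` is an `r`-net, so `#S ≥ N(2r)`, and the uniform measure on
`S` has correlation integral exactly `1 / #S`. Hence
`log N(2r) / -log r ≤ log I(r) / log r ≤ log N(r) / -log r`. In `ℝᵈ` a volume argument bounds
`log N(r) / -log r`, so trading `-log r` for `-log (2r)` on the left costs `o(1)`, and the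
substitution `r ↦ 2r` does not change a `liminf` or `limsup` at `0⁺`.
-/

open Function
open scoped ENNReal NNReal

section CoverNum

variable {X : Type*} [MetricSpace X] {E : Set X} {r : ℝ}

lemma Metric.IsSeparated.lt_dist {ε : ℝ≥0} {s : Set X} (hs : IsSeparated ε s) {x y : X}
    (hx : x ∈ s) (hy : y ∈ s) (hxy : x ≠ y) : (ε : ℝ) < dist x y := by
  have h : (ε : ℝ≥0∞) < edist x y := hs hx hy hxy
  rwa [edist_nndist, ENNReal.coe_lt_coe, ← NNReal.coe_lt_coe, coe_nndist] at h

lemma TotallyBounded.packingNumber_ne_top (hE : TotallyBounded E) {ε : ℝ≥0} (hε : ε ≠ 0) :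
    packingNumber ε E ≠ ⊤ := by
  obtain ⟨N, -, hN, hcov⟩ := exists_finite_isCover_of_totallyBounded (half_pos hε.bot_lt).ne' hE
  refine ne_top_of_le_ne_top hN.encard_lt_top.ne ?_
  calc packingNumber ε E = packingNumber (2 * (ε / 2)) E := by rw [mul_div_cancel₀ _ two_ne_zero]
    _ ≤ externalCoveringNumber (ε / 2) E := packingNumber_two_mul_le_externalCoveringNumber _ _
    _ ≤ N.encard := hcov.externalCoveringNumber_le_encard

lemma TotallyBounded.exists_finset_isSeparated_cover (hE : TotallyBounded E) {ε : ℝ≥0}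
    (hε : ε ≠ 0) : ∃ s : Finset X, ↑s ⊆ E ∧ IsSeparated ε (s : Set X) ∧
      E ⊆ ⋃ x ∈ s, closedBall x ε := by
  have hfin := hE.packingNumber_ne_top hε
  have hS : (maximalSeparatedSet ε E).Finite := Set.encard_ne_top_iff.1 <| by
    rwa [encard_maximalSeparatedSet hfin]
  refine ⟨hS.toFinset, by simpa using maximalSeparatedSet_subset,
    by simpa using isSeparated_maximalSeparatedSet, ?_⟩
  simpa [← isCover_iff_subset_iUnion_closedBall] using isCover_maximalSeparatedSet hfin

lemma coverNum_le_card {𝒰 : Finset (Set X)} (hdiam : ∀ U ∈ 𝒰, ediam U ≤ ENNReal.ofReal r)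
    (hcov : E ⊆ ⋃ U ∈ 𝒰, U) : coverNum E r ≤ 𝒰.card :=
  Nat.sInf_le ⟨𝒰, rfl, hdiam, hcov⟩

lemma coverNum_pos_of_cover (hne : E.Nonempty) {𝒰 : Finset (Set X)}
    (hdiam : ∀ U ∈ 𝒰, ediam U ≤ ENNReal.ofReal r) (hcov : E ⊆ ⋃ U ∈ 𝒰, U) :
    0 < coverNum E r := by
  refine Nat.pos_of_ne_zero fun h0 => ?_
  rcases Nat.sInf_eq_zero.1 h0 with ⟨𝒱, h𝒱, -, hE𝒱⟩ | hempty
  · obtain ⟨x, hx⟩ := hne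
    simpa [Finset.card_eq_zero.1 h𝒱] using hE𝒱 hx
  · exact hempty.subset ⟨𝒰, rfl, hdiam, hcov⟩

lemma exists_finset_card_eq_coverNum (h : coverNum E r ≠ 0) :
    ∃ 𝒰 : Finset (Set X), 𝒰.card = coverNum E r ∧
      (∀ U ∈ 𝒰, ediam U ≤ ENNReal.ofReal r) ∧ E ⊆ ⋃ U ∈ 𝒰, U :=
  Nat.sInf_mem (Nat.nonempty_of_pos_sInf (Nat.pos_of_ne_zero h))

lemma ediam_closedBall_le_two_mul (x : X) : ediam (closedBall x r) ≤ ENNReal.ofReal (2 * r) :=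
  ediam_le_of_forall_dist_le fun y hy z hz => by
    linarith [dist_triangle_right y z x, mem_closedBall.1 hy, mem_closedBall.1 hz]

lemma exists_finset_ediam_le_cover_of_closedBall {s : Finset X}
    (hs : E ⊆ ⋃ x ∈ s, closedBall x r) :
    ∃ 𝒰 : Finset (Set X), 𝒰.card ≤ s.card ∧
      (∀ U ∈ 𝒰, ediam U ≤ ENNReal.ofReal (2 * r)) ∧ E ⊆ ⋃ U ∈ 𝒰, U := by
  classical
  refine ⟨s.image (closedBall · r), Finset.card_image_le, ?_, ?_⟩
  · simpa using fun x _ => ediam_closedBall_le_two_mul x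
  · simpa [Set.subset_def] using hs

lemma coverNum_two_mul_le_card {s : Finset X} (hs : E ⊆ ⋃ x ∈ s, closedBall x r) :
    coverNum E (2 * r) ≤ s.card :=
  let ⟨_, hcard, hdiam, hcov⟩ := exists_finset_ediam_le_cover_of_closedBall hs
  (coverNum_le_card hdiam hcov).trans hcard

lemma TotallyBounded.coverNum_pos (hE : TotallyBounded E) (hne : E.Nonempty) (hr : 0 < r) :
    0 < coverNum E r := by
  obtain ⟨s, -, -, hs⟩ := hE.exists_finset_isSeparated_cover (ε := (r / 2).toNNReal)
    (by simpa using hr)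
  rw [Real.coe_toNNReal _ (by positivity)] at hs
  obtain ⟨𝒰, -, hdiam, hcov⟩ := exists_finset_ediam_le_cover_of_closedBall hs
  rw [mul_div_cancel₀ r two_ne_zero] at hdiam
  exact coverNum_pos_of_cover hne hdiam hcov

end CoverNum

section Volume

variable {F : Type*} [NormedAddCommGroup F]

lemma card_mul_measure_closedBall_le [MeasurableSpace F] [BorelSpace F] (μ : Measure F)
    [μ.IsAddHaarMeasure] {ε : ℝ≥0} {s : Finset F} (hs : IsSeparated ε (s : Set F)) {x : F}
    {R : ℝ} (hsub : ↑s ⊆ closedBall x R) :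
    s.card * μ (closedBall 0 (ε / 2)) ≤ μ (closedBall x (R + ε / 2)) := by
  have hdisj : (s : Set F).PairwiseDisjoint (closedBall · (ε / 2)) := fun y hy z hz hyz => by
    refine closedBall_disjoint_closedBall ?_
    linarith [hs.lt_dist hy hz hyz]
  calc s.card * μ (closedBall 0 (ε / 2)) = ∑ y ∈ s, μ (closedBall y (ε / 2)) := by
        simp [Measure.addHaar_closedBall_center μ]
    _ = μ (⋃ y ∈ s, closedBall y (ε / 2)) :=
        (measure_biUnion_finset hdisj fun _ _ => measurableSet_closedBall).symm
    _ ≤ μ (closedBall x (R + ε / 2)) := by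
        refine measure_mono (iUnion₂_subset fun y hy => closedBall_subset_closedBall' ?_)
        linarith [mem_closedBall.1 (hsub hy)]

lemma Bornology.IsBounded.coverNum_le_div_pow [NormedSpace ℝ F] [FiniteDimensional ℝ F]
    {E : Set F} (hE : Bornology.IsBounded E) :
    ∃ C : ℝ, 1 ≤ C ∧ ∀ r : ℝ, 0 < r → r ≤ 1 →
      (coverNum E r : ℝ) ≤ C / r ^ Module.finrank ℝ F := by
  let _ : MeasurableSpace F := borel F
  have _ : BorelSpace F := ⟨rfl⟩
  set μ : Measure F := Measure.addHaar
  set n := Module.finrank ℝ F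
  obtain ⟨R, hER⟩ := hE.subset_closedBall 0
  set V := μ.real (closedBall 0 (R + 1))
  set c := μ.real (closedBall (0 : F) 1)
  have hc : 0 < c := ENNReal.toReal_pos (measure_closedBall_pos μ 0 one_pos).ne'
    measure_closedBall_lt_top.ne
  refine ⟨max 1 (4 ^ n * V / c), le_max_left _ _, fun r hr hr1 => ?_⟩
  obtain ⟨s, hsE, hsep, hcov⟩ := hE.isCompact_closure.totallyBounded.subset subset_closure
    |>.exists_finset_isSeparated_cover (ε := (r / 2).toNNReal) (by simpa using hr)
  have hvol := card_mul_measure_closedBall_le μ hsep (hsE.trans hER)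
  rw [Real.coe_toNNReal _ (by positivity)] at hcov hvol
  have hcard : (s.card : ℝ) * ((r / 4) ^ n * c) ≤ V := by
    have hball : μ.real (closedBall 0 (r / 2 / 2)) = (r / 4) ^ n * c := by
      rw [Measure.addHaar_real_closedBall' μ _ (by positivity), show r / 2 / 2 = r / 4 by ring]
    rw [← hball]
    have hR : R + r / 2 / 2 ≤ R + 1 := by linarith
    have := ENNReal.toReal_mono measure_closedBall_lt_top.ne
      (hvol.trans (measure_mono (closedBall_subset_closedBall hR)))
    rwa [ENNReal.toReal_mul, ENNReal.toReal_natCast] at this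
  calc (coverNum E r : ℝ) ≤ s.card := by
        have := coverNum_two_mul_le_card hcov
        rw [mul_div_cancel₀ r two_ne_zero] at this
        exact_mod_cast this
    _ ≤ V / ((r / 4) ^ n * c) := by rw [le_div_iff₀ (by positivity)]; exact hcard
    _ = 4 ^ n * V / c / r ^ n := by rw [div_pow]; field_simp
    _ ≤ max 1 (4 ^ n * V / c) / r ^ n := by gcongr; exact le_max_right _ _

end Volume

section CorrelationIntegral

variable {X : Type*} [MetricSpace X] [MeasurableSpace X] {μ : Measure X} {E : Set X} {r : ℝ}

lemma msupport_eq_support : msupport μ = μ.support := by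
  ext x
  simp only [msupport, Measure.support_eq_forall_isOpen, mem_ofPred_eq, pos_iff_ne_zero]
  exact forall_congr' fun U => forall_comm

lemma measure_compl_eq_zero_of_mem_probOn [HereditarilyLindelofSpace X] (hμ : μ ∈ probOn E) :
    μ Eᶜ = 0 :=
  measure_mono_null (compl_subset_compl.2 (msupport_eq_support (μ := μ) ▸ hμ.2))
    Measure.measure_compl_support

lemma sum_sq_measure_le_lintegral_measure_closedBall {ι : Type*} [Fintype ι] {W : ι → Set X}
    (hW : ∀ i, MeasurableSet (W i)) (hd : Pairwise (Disjoint on W))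
    (hsmall : ∀ i, ∀ x ∈ W i, W i ⊆ closedBall x r) :
    ∑ i, μ (W i) ^ 2 ≤ ∫⁻ x, μ (closedBall x r) ∂μ :=
  calc ∑ i, μ (W i) ^ 2 = ∑ i, ∫⁻ _ in W i, μ (W i) ∂μ := by simp [sq]
    _ ≤ ∑ i, ∫⁻ x in W i, μ (closedBall x r) ∂μ := Finset.sum_le_sum fun i _ =>
        setLIntegral_mono' (hW i) fun x hx => measure_mono (hsmall i x hx)
    _ = ∫⁻ x in ⋃ i, W i, μ (closedBall x r) ∂μ := by rw [lintegral_iUnion hW hd, tsum_fintype]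
    _ ≤ ∫⁻ x, μ (closedBall x r) ∂μ := setLIntegral_le_lintegral _ _

lemma exists_partition_of_ediam_le [OpensMeasurableSpace X] (hr : 0 ≤ r) {𝒰 : Finset (Set X)}
    (hdiam : ∀ U ∈ 𝒰, ediam U ≤ ENNReal.ofReal r) :
    ∃ W : Fin 𝒰.card → Set X, (∀ i, MeasurableSet (W i)) ∧ Pairwise (Disjoint on W) ∧
      (∀ i, ∀ x ∈ W i, W i ⊆ closedBall x r) ∧ ⋃ U ∈ 𝒰, U ⊆ ⋃ i, W i := by
  set V : Fin 𝒰.card → Set X := fun i => closure (𝒰.equivFin.symm i)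
  have hV (i) : MeasurableSet (V i) := isClosed_closure.measurableSet
  refine ⟨disjointed V, fun i => disjointedRec (fun _ j ht => ht.diff (hV j)) (hV i),
    disjoint_disjointed V, fun i x hx y hy => ?_, ?_⟩
  · have h := (edist_le_ediam_of_mem (disjointed_subset V i hy) (disjointed_subset V i hx)).trans
      ((ediam_closure _).trans_le (hdiam _ (𝒰.equivFin.symm i).2))
    exact mem_closedBall.2 ((edist_le_ofReal hr).1 h)
  · rw [iUnion_disjointed]
    refine iUnion₂_subset fun U hU => ?_
    refine subset_closure.trans (subset_iUnion_of_subset (𝒰.equivFin ⟨U, hU⟩) ?_)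
    simp [V]

lemma one_div_coverNum_le_corrInt [OpensMeasurableSpace X] [HereditarilyLindelofSpace X]
    (hr : 0 ≤ r) (hμ : μ ∈ probOn E) : 1 / (coverNum E r : ℝ) ≤ corrInt μ r := by
  have : IsProbabilityMeasure μ := hμ.1
  rcases eq_or_ne (coverNum E r) 0 with h0 | h0
  · -- no finite cover exists (`sInf ∅ = 0`), and then the left side is `1 / 0 = 0`
    simp [h0, corrInt]
  obtain ⟨𝒰, hcard, hdiam, hcov⟩ := exists_finset_card_eq_coverNum h0
  obtain ⟨W, hWm, hWd, hWsmall, hWcov⟩ := exists_partition_of_ediam_le hr hdiam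
  have hmass : 1 ≤ ∑ i, μ.real (W i) := by
    have hE : μ E = 1 := by
      rw [measure_congr (ae_eq_univ.2 (measure_compl_eq_zero_of_mem_probOn hμ)), measure_univ]
    rw [← measureReal_iUnion_fintype hWd hWm, ← ENNReal.toReal_one, ← hE]
    exact ENNReal.toReal_mono (measure_ne_top _ _) (measure_mono (hcov.trans hWcov))
  have hsq : ∑ i, μ.real (W i) ^ 2 ≤ corrInt μ r := by
    have h := sum_sq_measure_le_lintegral_measure_closedBall (μ := μ) hWm hWd hWsmall
    have hfin : ∫⁻ x, μ (closedBall x r) ∂μ ≠ ⊤ :=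
      ((lintegral_mono fun _ => prob_le_one).trans_lt (by simp)).ne
    have := ENNReal.toReal_mono hfin h
    rw [ENNReal.toReal_sum fun i _ => ENNReal.pow_ne_top (measure_ne_top μ _)] at this
    simpa only [ENNReal.toReal_pow, measureReal_def, corrInt] using this
  have hCS : (∑ i, μ.real (W i)) ^ 2 ≤ 𝒰.card * ∑ i, μ.real (W i) ^ 2 := by
    simpa using sq_sum_le_card_mul_sum_sq (s := Finset.univ) (f := fun i => μ.real (W i))
  have hpos : (0 : ℝ) < 𝒰.card := by exact_mod_cast hcard ▸ Nat.pos_of_ne_zero h0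
  rw [← hcard, div_le_iff₀' hpos]
  nlinarith

end CorrelationIntegral

section UniformMeasure

variable {X : Type*} [MetricSpace X] [MeasurableSpace X] [OpensMeasurableSpace X]
  {s : Finset X} (hs : s.Nonempty)

lemma PMF.toMeasure_uniformOfFinset_compl : (PMF.uniformOfFinset s hs).toMeasure (↑s)ᶜ = 0 := by
  rw [PMF.toMeasure_apply_eq_zero_iff _ s.finite_toSet.isClosed.isOpen_compl.measurableSet,
    PMF.support_uniformOfFinset]
  exact disjoint_compl_right

lemma PMF.toMeasure_uniformOfFinset_mem_probOn {E : Set X} (hsE : ↑s ⊆ E) :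
    (PMF.uniformOfFinset s hs).toMeasure ∈ probOn E := by
  refine ⟨inferInstance, fun x hx => hsE (by_contra fun hxs => ?_)⟩
  exact hx _ s.finite_toSet.isClosed.isOpen_compl hxs (PMF.toMeasure_uniformOfFinset_compl hs)

lemma PMF.corrInt_uniformOfFinset {ε : ℝ≥0} (hsep : IsSeparated ε (s : Set X)) :
    corrInt (PMF.uniformOfFinset s hs).toMeasure ε = 1 / s.card := by
  classical
  set ν := (PMF.uniformOfFinset s hs).toMeasure
  have hball : ∀ y ∈ s, ν (closedBall y ε) = (s.card : ℝ≥0∞)⁻¹ := fun y hy => by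
    have : {x ∈ s | x ∈ closedBall y ε} = {y} := by
      ext x
      simp only [Finset.mem_filter, Finset.mem_singleton, mem_closedBall]
      refine ⟨fun ⟨hx, hxy⟩ => by_contra fun hne => ?_, fun h => by subst h; exact ⟨hy, by simp⟩⟩
      linarith [hsep.lt_dist hx hy hne]
    rw [PMF.toMeasure_uniformOfFinset_apply hs _ measurableSet_closedBall, this,
      Finset.card_singleton, Nat.cast_one, one_div]
  have hae : ∀ᵐ x ∂ν, x ∈ (s : Set X) := mem_ae_iff.2 (PMF.toMeasure_uniformOfFinset_compl hs)
  rw [corrInt, lintegral_congr_ae (hae.mono fun x hx => hball x hx)]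
  simp

end UniformMeasure

section CorrelationInfimum

variable {X : Type*} [MetricSpace X] [MeasurableSpace X] [OpensMeasurableSpace X]
  {E : Set X} {r : ℝ}

noncomputable def corrIntInf (E : Set X) (r : ℝ) : ℝ :=
  sInf ((fun μ => corrInt μ r) '' probOn E)

lemma one_div_coverNum_le_corrIntInf [HereditarilyLindelofSpace X] (hne : E.Nonempty)
    (hr : 0 ≤ r) : 1 / (coverNum E r : ℝ) ≤ corrIntInf E r := by
  obtain ⟨p, hp⟩ := hne
  refine le_csInf ⟨_, _, PMF.toMeasure_uniformOfFinset_mem_probOn (Finset.singleton_nonempty p)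
    (by simpa using hp), rfl⟩ ?_
  rintro _ ⟨μ, hμ, rfl⟩
  exact one_div_coverNum_le_corrInt hr hμ

lemma corrIntInf_le_one_div_coverNum_two_mul (hE : TotallyBounded E) (hne : E.Nonempty)
    (hr : 0 < r) : corrIntInf E r ≤ 1 / (coverNum E (2 * r) : ℝ) := by
  obtain ⟨s, hsE, hsep, hcov⟩ := hE.exists_finset_isSeparated_cover (ε := r.toNNReal)
    (by simpa using hr)
  rw [Real.coe_toNNReal _ hr.le] at hcov
  have hs : s.Nonempty := by
    obtain ⟨x, hx⟩ := hne
    obtain ⟨y, hy, -⟩ := mem_iUnion₂.1 (hcov hx)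
    exact ⟨y, hy⟩
  have hbdd : BddBelow ((fun μ => corrInt μ r) '' probOn E) :=
    ⟨0, forall_mem_image.2 fun _ _ => ENNReal.toReal_nonneg⟩
  calc corrIntInf E r ≤ corrInt (PMF.uniformOfFinset s hs).toMeasure r :=
        csInf_le hbdd ⟨_, PMF.toMeasure_uniformOfFinset_mem_probOn hs hsE, rfl⟩
    _ = 1 / s.card := by
        simpa [Real.coe_toNNReal _ hr.le] using PMF.corrInt_uniformOfFinset hs hsep
    _ ≤ 1 / (coverNum E (2 * r) : ℝ) := by
        gcongr
        · exact_mod_cast hE.coverNum_pos hne (by positivity)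
        · exact_mod_cast coverNum_two_mul_le_card hcov

lemma log_corrIntInf_div_log_mem_Icc [HereditarilyLindelofSpace X] (hE : TotallyBounded E)
    (hne : E.Nonempty) (hr : 0 < r) (hr1 : r < 1) :
    Real.log (corrIntInf E r) / Real.log r ∈
      Icc (Real.log (coverNum E (2 * r)) / -Real.log r)
        (Real.log (coverNum E r) / -Real.log r) := by
  have hN₁ : (0 : ℝ) < coverNum E r := by exact_mod_cast hE.coverNum_pos hne hr
  have hN₂ : (0 : ℝ) < coverNum E (2 * r) := by exact_mod_cast hE.coverNum_pos hne (by positivity)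
  have hlow := one_div_coverNum_le_corrIntInf hne hr.le
  have hup := corrIntInf_le_one_div_coverNum_two_mul hE hne hr
  have hI : 0 < corrIntInf E r := lt_of_lt_of_le (by positivity) hlow
  have hlogr : 0 ≤ -Real.log r := by linarith [Real.log_neg hr hr1]
  have hlog_up : Real.log (corrIntInf E r) ≤ -Real.log (coverNum E (2 * r)) := by
    simpa using Real.log_le_log hI hup
  have hlog_low : -Real.log (coverNum E r) ≤ Real.log (corrIntInf E r) := by
    simpa using Real.log_le_log (by positivity) hlow
  rw [← neg_div_neg_eq (Real.log (corrIntInf E r))]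
  exact ⟨div_le_div_of_nonneg_right (by linarith) hlogr,
    div_le_div_of_nonneg_right (by linarith) hlogr⟩

end CorrelationInfimum

section Limits

lemma tendsto_neg_log_nhdsGT_zero : Tendsto (fun r => -Real.log r) (𝓝[>] 0) atTop :=
  tendsto_neg_atBot_atTop.comp Real.tendsto_log_nhdsGT_zero

lemma eventually_nhdsGT_zero_neg_log_pos : ∀ᶠ r in 𝓝[>] (0 : ℝ), 0 < -Real.log r :=
  tendsto_neg_log_nhdsGT_zero.eventually_gt_atTop 0

lemma liminf_eq_liminf_of_tendsto_sub {ι : Type*} {l : Filter ι} [l.NeBot] {u v : ι → ℝ}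
    (h : Tendsto (u - v) l (𝓝 0)) (hv : IsBoundedUnder (· ≤ ·) l v)
    (hv' : IsBoundedUnder (· ≥ ·) l v) : liminf u l = liminf v l := by
  have hu : u = (u - v) + v := (sub_add_cancel u v).symm
  have h₁ := h.isBoundedUnder_ge
  have h₂ := h.isBoundedUnder_le
  rw [hu]
  refine le_antisymm ?_ ?_
  · calc liminf (u - v + v) l ≤ limsup (u - v) l + liminf v l :=
          liminf_add_le h₁ h₂ hv' hv.isCoboundedUnder_ge
      _ = liminf v l := by rw [h.limsup_eq, zero_add]
  · calc liminf v l = liminf (u - v) l + liminf v l := by rw [h.liminf_eq, zero_add]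
      _ ≤ liminf (u - v + v) l := le_liminf_add h₁ h₂ hv' hv.isCoboundedUnder_ge

lemma limsup_eq_limsup_of_tendsto_sub {ι : Type*} {l : Filter ι} [l.NeBot] {u v : ι → ℝ}
    (h : Tendsto (u - v) l (𝓝 0)) (hv : IsBoundedUnder (· ≤ ·) l v)
    (hv' : IsBoundedUnder (· ≥ ·) l v) : limsup u l = limsup v l := by
  have hu : u = v + (u - v) := (add_sub_cancel v u).symm
  have h₁ := h.isBoundedUnder_ge
  have h₂ := h.isBoundedUnder_le
  rw [hu]
  refine le_antisymm ?_ ?_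
  · calc limsup (v + (u - v)) l ≤ limsup v l + limsup (u - v) l :=
          limsup_add_le hv' hv h₁.isCoboundedUnder_le h₂
      _ = limsup v l := by rw [h.limsup_eq, add_zero]
  · calc limsup v l = limsup v l + liminf (u - v) l := by rw [h.liminf_eq, add_zero]
      _ ≤ limsup (v + (u - v)) l := le_limsup_add hv hv'.isCoboundedUnder_le h₂ h₁

lemma map_mul_left_nhdsGT_zero {c : ℝ} (hc : 0 < c) : map (c * ·) (𝓝[>] 0) = 𝓝[>] 0 := by
  conv_lhs => rw [← comap_mulLeft_nhdsGT_zero hc]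
  exact map_comap_of_surjective (mul_left_surjective₀ hc.ne') _

lemma liminf_comp_mul_left_nhdsGT_zero {c : ℝ} (hc : 0 < c) (u : ℝ → ℝ) :
    liminf (fun r => u (c * r)) (𝓝[>] 0) = liminf u (𝓝[>] 0) := by
  simpa [Function.comp_def, map_mul_left_nhdsGT_zero hc] using liminf_comp u (c * ·) (𝓝[>] 0)

lemma limsup_comp_mul_left_nhdsGT_zero {c : ℝ} (hc : 0 < c) (u : ℝ → ℝ) :
    limsup (fun r => u (c * r)) (𝓝[>] 0) = limsup u (𝓝[>] 0) := by
  simpa [Function.comp_def, map_mul_left_nhdsGT_zero hc] using limsup_comp u (c * ·) (𝓝[>] 0)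

end Limits

section DoublingSqueeze

variable {g F : ℝ → ℝ}

lemma tendsto_div_neg_log_sub_div_neg_log_two_mul
    (hbdd : IsBoundedUnder (· ≤ ·) (𝓝[>] 0) fun r => |g (2 * r) / -Real.log (2 * r)|) :
    Tendsto (fun r => g (2 * r) / -Real.log r - g (2 * r) / -Real.log (2 * r)) (𝓝[>] 0) (𝓝 0) := by
  have hlog : Tendsto (fun r => Real.log 2 / -Real.log r) (𝓝[>] 0) (𝓝 0) :=
    tendsto_const_nhds.div_atTop tendsto_neg_log_nhdsGT_zero
  have hprod := hlog.zero_mul_isBoundedUnder_le (g := fun r => -(g (2 * r) / -Real.log (2 * r)))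
    (by simpa [Function.comp_def] using hbdd)
  refine hprod.congr' ?_
  filter_upwards [self_mem_nhdsWithin, eventually_nhdsGT_zero_neg_log_pos,
    eventually_nhdsGT_zero_mul_left two_pos eventually_nhdsGT_zero_neg_log_pos] with r hr h₁ h₂
  rw [Real.log_mul two_ne_zero (ne_of_gt hr)] at h₂ ⊢
  have ht : Real.log r ≠ 0 := by linarith
  have hs : Real.log 2 + Real.log r ≠ 0 := by linarith
  field_simp
  ring

theorem liminf_eq_and_limsup_eq_of_mem_Icc (hg : ∀ᶠ r in 𝓝[>] 0, 0 ≤ g r)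
    (hbdd : IsBoundedUnder (· ≤ ·) (𝓝[>] 0) fun r => g r / -Real.log r)
    (hF : ∀ᶠ r in 𝓝[>] 0, F r ∈ Icc (g (2 * r) / -Real.log r) (g r / -Real.log r)) :
    liminf (fun r => g r / -Real.log r) (𝓝[>] 0) = liminf F (𝓝[>] 0) ∧
      limsup (fun r => g r / -Real.log r) (𝓝[>] 0) = limsup F (𝓝[>] 0) := by
  set a := fun r => g r / -Real.log r
  set b := fun r => g (2 * r) / -Real.log r
  have ha₀ : ∀ᶠ r in 𝓝[>] 0, 0 ≤ a r := by
    filter_upwards [hg, eventually_nhdsGT_zero_neg_log_pos] with r h₁ h₂ using by positivity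
  have hb₀ : ∀ᶠ r in 𝓝[>] 0, 0 ≤ b r := by
    filter_upwards [eventually_nhdsGT_zero_mul_left two_pos hg,
      eventually_nhdsGT_zero_neg_log_pos] with r h₁ h₂ using by positivity
  obtain ⟨C, hC⟩ := hbdd
  have hC : ∀ᶠ r in 𝓝[>] 0, a r ≤ C := hC
  have ha₂ : IsBoundedUnder (· ≤ ·) (𝓝[>] 0) (fun r => a (2 * r)) :=
    isBoundedUnder_of_eventually_le (eventually_nhdsGT_zero_mul_left two_pos hC)
  have ha₂' : IsBoundedUnder (· ≥ ·) (𝓝[>] 0) (fun r => a (2 * r)) :=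
    isBoundedUnder_of_eventually_ge (eventually_nhdsGT_zero_mul_left two_pos ha₀)
  have hsub : Tendsto (b - fun r => a (2 * r)) (𝓝[>] 0) (𝓝 0) :=
    tendsto_div_neg_log_sub_div_neg_log_two_mul (isBoundedUnder_le_abs.2 ⟨ha₂, ha₂'⟩)
  have hFa : ∀ᶠ r in 𝓝[>] 0, F r ≤ a r := hF.mono fun _ h => h.2
  have hbF : ∀ᶠ r in 𝓝[>] 0, b r ≤ F r := hF.mono fun _ h => h.1
  have hF_le : IsBoundedUnder (· ≤ ·) (𝓝[>] 0) F :=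
    isBoundedUnder_of_eventually_le ((hFa.and hC).mono fun _ h => h.1.trans h.2)
  have hF_ge : IsBoundedUnder (· ≥ ·) (𝓝[>] 0) F :=
    isBoundedUnder_of_eventually_ge ((hbF.and hb₀).mono fun _ h => h.2.trans h.1)
  have ha_le : IsBoundedUnder (· ≤ ·) (𝓝[>] 0) a := isBoundedUnder_of_eventually_le hC
  have hb_ge : IsBoundedUnder (· ≥ ·) (𝓝[>] 0) b := isBoundedUnder_of_eventually_ge hb₀
  constructor
  · refine le_antisymm ?_ (liminf_le_liminf hFa hF_ge ha_le.isCoboundedUnder_ge)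
    calc liminf a (𝓝[>] 0) = liminf b (𝓝[>] 0) := by
          rw [liminf_eq_liminf_of_tendsto_sub hsub ha₂ ha₂',
            liminf_comp_mul_left_nhdsGT_zero two_pos]
      _ ≤ liminf F (𝓝[>] 0) := liminf_le_liminf hbF hb_ge hF_le.isCoboundedUnder_ge
  · refine le_antisymm ?_ (limsup_le_limsup hFa hF_ge.isCoboundedUnder_le ha_le)
    calc limsup a (𝓝[>] 0) = limsup b (𝓝[>] 0) := by
          rw [limsup_eq_limsup_of_tendsto_sub hsub ha₂ ha₂',
            limsup_comp_mul_left_nhdsGT_zero two_pos]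
      _ ≤ limsup F (𝓝[>] 0) := limsup_le_limsup hbF hb_ge.isCoboundedUnder_le hF_le

end DoublingSqueeze

lemma Bornology.IsBounded.isBoundedUnder_log_coverNum_div {F : Type*} [NormedAddCommGroup F]
    [NormedSpace ℝ F] [FiniteDimensional ℝ F] {E : Set F} (hE : Bornology.IsBounded E) :
    IsBoundedUnder (· ≤ ·) (𝓝[>] 0) fun r => Real.log (coverNum E r) / -Real.log r := by
  obtain ⟨C, hC1, hC⟩ := hE.coverNum_le_div_pow
  set n := Module.finrank ℝ F
  have hlim : Tendsto (fun r => Real.log C / -Real.log r + n) (𝓝[>] 0) (𝓝 (0 + n)) :=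
    (tendsto_const_nhds.div_atTop tendsto_neg_log_nhdsGT_zero).add_const _
  refine hlim.isBoundedUnder_le.mono_le ?_
  filter_upwards [Ioo_mem_nhdsGT zero_lt_one] with r ⟨hr, hr1⟩
  have hlogr : 0 < -Real.log r := by linarith [Real.log_neg hr hr1]
  have hlogN : Real.log (coverNum E r) ≤ Real.log C + n * -Real.log r := by
    rcases (Nat.zero_le (coverNum E r)).eq_or_lt with h0 | hpos
    · rw [← h0, Nat.cast_zero, Real.log_zero]
      have := Real.log_nonneg hC1
      positivity
    · calc Real.log (coverNum E r) ≤ Real.log (C / r ^ n) :=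
            Real.log_le_log (by exact_mod_cast hpos) (hC r hr hr1.le)
        _ = Real.log C + n * -Real.log r := by
            rw [Real.log_div (by positivity) (by positivity), Real.log_pow]; ring
  rw [div_add' _ _ _ hlogr.ne']
  exact div_le_div_of_nonneg_right hlogN hlogr.le

theorem stmt4_general {d : ℕ} (E : Set (EuclideanSpace ℝ (Fin d)))
    (hb : Bornology.IsBounded E) (hne : E.Nonempty) :
    lbd E = liminf (fun r : ℝ =>
        Real.log (sInf ((fun μ => corrInt μ r) '' probOn E)) / Real.log r) (𝓝[>] 0) ∧
    ubd E = limsup (fun r : ℝ =>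
        Real.log (sInf ((fun μ => corrInt μ r) '' probOn E)) / Real.log r) (𝓝[>] 0) := by
  have hE : TotallyBounded E := hb.isCompact_closure.totallyBounded.subset subset_closure
  refine liminf_eq_and_limsup_eq_of_mem_Icc (g := fun r => Real.log (coverNum E r))
    (.of_forall fun r => Real.log_natCast_nonneg _) hb.isBoundedUnder_log_coverNum_div ?_
  filter_upwards [Ioo_mem_nhdsGT zero_lt_one] with r ⟨hr, hr1⟩
  exact log_corrIntInf_div_log_mem_Icc hE hne hr hr1

theorem stmt4 {d : ℕ} (E : Set (EuclideanSpace ℝ (Fin d)))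
    (hb : Bornology.IsBounded E) (hne : E.Nonempty) (hE : MeasurableSet E) :
    lbd E = liminf (fun r : ℝ =>
        Real.log (sInf ((fun μ => corrInt μ r) '' probOn E)) / Real.log r) (𝓝[>] 0) ∧
    ubd E = limsup (fun r : ℝ =>
        Real.log (sInf ((fun μ => corrInt μ r) '' probOn E)) / Real.log r) (𝓝[>] 0) :=
  stmt4_general E hb hne
end

section
/- Let E be a nonempty compact subset of ℝ^d and let 0 ≤ s < mubd E. Then there exists μ ∈ 𝒫(E) such that for every x ∈ ℝ^d there are arbitrarily small r > 0 with μ(B(x,r)) ≤ r^s. -/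
open MeasureTheory Metric Filter Set Topology

/-!
Fix `s < t < mubd E`. Deleting from `E` the basic open sets `V` such that `E ∩ V` is covered by
countably many compact sets of upper box dimension `≤ t` leaves a nonempty compact set `K` all of
whose relative balls have upper box dimension `> t`.

Inside `K` we build generations of cells: well-separated balls `B(x, ρ)`, each carrying an
interval of `[0, 1)` of length `≤ ρ ^ s`, the intervals of one generation partitioning `[0, 1)`.
The children of a cell are centred at a maximal separated subset of `K ∩ B(x, ρ / 4)` at a scale
`r` where this set needs more than `r ^ (-t)` sets of diameter `r`, and split the parent's interval
equally, so each gets length `< r ^ t ≤ (r / 18) ^ s` for small `r`. Following the cells whose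
intervals contain `u` defines `g u ∈ K`, and `μ` is the image of Lebesgue measure on `[0, 1)`
under `g`. Given `x` and a generation, either `x` lies within twice the radius `ρ` of some cell,
and then separation forces `μ (B(x, ρ)) ≤ ρ ^ s`, or small balls around `x` are `μ`-null.
-/

open scoped NNReal

section CoverNum

variable {X : Type*} [MetricSpace X] {A B : Set X} {r ρ t : ℝ}

def IsDiamCover (r : ℝ) (A : Set X) (𝒰 : Finset (Set X)) : Prop :=
  (∀ U ∈ 𝒰, ediam U ≤ ENNReal.ofReal r) ∧ A ⊆ ⋃ U ∈ 𝒰, U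

lemma coverNum_le_card_s7 {𝒰 : Finset (Set X)} (h : IsDiamCover r A 𝒰) : coverNum A r ≤ 𝒰.card :=
  Nat.sInf_le ⟨𝒰, rfl, h⟩

lemma isDiamCover_image_closedBall {C : Finset X}
    (h : A ⊆ ⋃ y ∈ C, closedBall y ρ) : IsDiamCover (2 * ρ) A (C.image (closedBall · ρ)) := by
  refine ⟨?_, fun a ha => ?_⟩
  · simp only [Finset.mem_image, forall_exists_index, and_imp, forall_apply_eq_imp_iff₂]
    intro y _
    refine ediam_le_of_forall_dist_le fun a ha b hb => ?_
    linarith [dist_triangle_right a b y, mem_closedBall.mp ha, mem_closedBall.mp hb]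
  · obtain ⟨y, hy, hay⟩ := mem_iUnion₂.mp (h ha)
    exact mem_iUnion₂.mpr ⟨_, Finset.mem_image_of_mem _ hy, hay⟩

lemma coverNum_two_mul_le_card_s7 {C : Finset X}
    (h : A ⊆ ⋃ y ∈ C, closedBall y ρ) : coverNum A (2 * ρ) ≤ C.card :=
  (coverNum_le_card_s7 (isDiamCover_image_closedBall h)).trans Finset.card_image_le

lemma IsCompact.exists_isDiamCover (hA : IsCompact A) (hr : 0 < r) : ∃ 𝒰, IsDiamCover r A 𝒰 := by
  obtain ⟨N, -, hN, hAN⟩ :=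
    exists_finite_isCover_of_isCompact (ε := (r / 2).toNNReal) (by simpa using hr) hA
  rw [isCover_iff_subset_iUnion_closedBall, Real.coe_toNNReal _ (by positivity)] at hAN
  refine ⟨_, (mul_div_cancel₀ r two_ne_zero) ▸ isDiamCover_image_closedBall (C := hN.toFinset)
    (by simpa using hAN)⟩

lemma coverNum_mono (hAB : A ⊆ B) (hB : IsCompact B) (hr : 0 < r) :
    coverNum A r ≤ coverNum B r := by
  obtain ⟨𝒰, h𝒰⟩ := hB.exists_isDiamCover hr
  obtain ⟨𝒱, hcard, hdiam, hcov⟩ : coverNum B r ∈ {n | ∃ 𝒱 : Finset (Set X), 𝒱.card = n ∧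
      IsDiamCover r B 𝒱} := Nat.sInf_mem ⟨_, 𝒰, rfl, h𝒰⟩
  exact hcard ▸ coverNum_le_card_s7 ⟨hdiam, hAB.trans hcov⟩

lemma IsCompact.exists_isSeparated_coverNum_le (hA : IsCompact A) {ε : ℝ≥0} (hε : ε ≠ 0) :
    ∃ P : Finset X, ↑P ⊆ A ∧ IsSeparated ε (P : Set X) ∧ coverNum A (2 * ε) ≤ P.card := by
  have hpack : packingNumber ε A ≠ ⊤ := by
    obtain ⟨N, -, hN, hAN⟩ := exists_finite_isCover_of_isCompact (ε := ε / 2) (by simpa using hε) hA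
    refine ne_top_of_le_ne_top hN.encard_lt_top.ne ?_
    calc packingNumber ε A = packingNumber (2 * (ε / 2)) A := by rw [mul_div_cancel₀ ε two_ne_zero]
      _ ≤ externalCoveringNumber (ε / 2) A := packingNumber_two_mul_le_externalCoveringNumber _ _
      _ ≤ N.encard := hAN.externalCoveringNumber_le_encard
  have hfin : (maximalSeparatedSet ε A).Finite := by
    rw [← Set.encard_ne_top_iff, encard_maximalSeparatedSet hpack]
    exact hpack
  refine ⟨hfin.toFinset, by simpa using maximalSeparatedSet_subset,
    by simpa using isSeparated_maximalSeparatedSet, coverNum_two_mul_le_card_s7 ?_⟩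
  simpa [← isCover_iff_subset_iUnion_closedBall] using isCover_maximalSeparatedSet hpack

lemma eventually_log_coverNum_div_nonneg (A : Set X) :
    ∀ᶠ r in 𝓝[>] (0 : ℝ), 0 ≤ Real.log (coverNum A r) / -Real.log r := by
  filter_upwards [Ioo_mem_nhdsGT (zero_lt_one' ℝ)] with r ⟨hr0, hr1⟩
  exact div_nonneg (Real.log_natCast_nonneg _) (neg_nonneg.mpr (Real.log_nonpos hr0.le hr1.le))

lemma ubd_nonneg (A : Set X) : 0 ≤ ubd A := by
  rw [ubd, limsup_eq]
  refine Real.sInf_nonneg fun a ha => ?_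
  obtain ⟨r, h0, hle⟩ := ((eventually_log_coverNum_div_nonneg A).and ha).exists
  exact h0.trans hle

lemma ubd_empty : ubd (∅ : Set X) = 0 := by
  have : ∀ r, coverNum (∅ : Set X) r = 0 := fun r =>
    Nat.sInf_eq_zero.mpr (Or.inl ⟨∅, rfl, by simp, by simp⟩)
  simp [ubd, this]

lemma frequently_rpow_neg_lt_coverNum (ht : 0 ≤ t) (h : t < ubd A) :
    ∃ᶠ r in 𝓝[>] (0 : ℝ), r ^ (-t) < coverNum A r := by
  by_contra hfreq
  have hle : ∀ᶠ r in 𝓝[>] (0 : ℝ), Real.log (coverNum A r) / -Real.log r ≤ t := by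
    filter_upwards [not_frequently.mp hfreq, Ioo_mem_nhdsGT (zero_lt_one' ℝ)] with r hN ⟨hr0, hr1⟩
    have hlog := Real.log_neg hr0 hr1
    rw [div_le_iff₀ (neg_pos.mpr hlog)]
    rcases (Nat.cast_nonneg (coverNum A r) : (0 : ℝ) ≤ _).eq_or_lt with h0 | h0
    · rw [← h0, Real.log_zero]
      nlinarith
    · calc Real.log (coverNum A r) ≤ Real.log (r ^ (-t)) := Real.log_le_log h0 (not_lt.mp hN)
        _ = t * -Real.log r := by rw [Real.log_rpow hr0]; ring
  exact h.not_ge (limsup_le_of_le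
    (isCoboundedUnder_le_of_eventually_le _ (eventually_log_coverNum_div_nonneg A)) hle)

end CoverNum

section Kernel

variable {X : Type*} [MetricSpace X] {A B E : Set X} {t : ℝ}

def HasCompactCoverUbdLE (t : ℝ) (A : Set X) : Prop :=
  ∃ F : ℕ → Set X, (∀ i, IsCompact (F i)) ∧ A ⊆ ⋃ i, F i ∧ ∀ i, ubd (F i) ≤ t

lemma mubd_le (h : HasCompactCoverUbdLE t E) : mubd E ≤ t :=
  csInf_le ⟨0, fun _ ⟨F, _, _, hF⟩ => (ubd_nonneg (F 0)).trans (hF 0)⟩ h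

lemma HasCompactCoverUbdLE.mono (h : HasCompactCoverUbdLE t B) (hAB : A ⊆ B) :
    HasCompactCoverUbdLE t A :=
  let ⟨F, hFc, hBF, hFt⟩ := h
  ⟨F, hFc, hAB.trans hBF, hFt⟩

lemma IsCompact.hasCompactCoverUbdLE (hA : IsCompact A) (h : ubd A ≤ t) :
    HasCompactCoverUbdLE t A :=
  ⟨fun _ => A, fun _ => hA, subset_iUnion (fun _ => A) 0, fun _ => h⟩

lemma hasCompactCoverUbdLE_empty (ht : 0 ≤ t) : HasCompactCoverUbdLE t (∅ : Set X) :=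
  ⟨fun _ => ∅, fun _ => isCompact_empty, empty_subset _, fun _ => ubd_empty.trans_le ht⟩

lemma hasCompactCoverUbdLE_iUnion {ι : Type*} [Countable ι] [Nonempty ι] {A : ι → Set X}
    (h : ∀ i, HasCompactCoverUbdLE t (A i)) : HasCompactCoverUbdLE t (⋃ i, A i) := by
  obtain ⟨e, he⟩ := exists_surjective_nat ι
  choose F hFc hAF hFt using h
  refine ⟨fun m => F (e m.unpair.1) m.unpair.2, fun _ => hFc _ _, ?_, fun _ => hFt _ _⟩
  refine iUnion_subset fun i x hx => ?_
  obtain ⟨n, rfl⟩ := he i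
  obtain ⟨j, hj⟩ := mem_iUnion.mp (hAF _ hx)
  exact mem_iUnion.mpr ⟨Nat.pair n j, by simpa using hj⟩

lemma HasCompactCoverUbdLE.union (hA : HasCompactCoverUbdLE t A)
    (hB : HasCompactCoverUbdLE t B) : HasCompactCoverUbdLE t (A ∪ B) := by
  rw [union_eq_iUnion]
  exact hasCompactCoverUbdLE_iUnion fun b => by cases b <;> assumption

lemma hasCompactCoverUbdLE_biUnion {ι : Type*} {S : Set ι} (hS : S.Countable) {A : ι → Set X}
    (ht : 0 ≤ t) (h : ∀ i ∈ S, HasCompactCoverUbdLE t (A i)) :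
    HasCompactCoverUbdLE t (⋃ i ∈ S, A i) := by
  rcases S.eq_empty_or_nonempty with rfl | ⟨i, hi⟩
  · simpa using hasCompactCoverUbdLE_empty ht
  have := hS.to_subtype
  have : Nonempty S := ⟨⟨i, hi⟩⟩
  rw [biUnion_eq_iUnion]
  exact hasCompactCoverUbdLE_iUnion fun i => h i i.2

/-- `t < ubd (K ∩ closedBall p ρ)` for all `p ∈ K` and `ρ > 0`, in terms of covering numbers:
unlike `ubd`, this form is monotone in the set and has no junk value at `∞`. -/
def UbdLocallyGT (t : ℝ) (K : Set X) : Prop :=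
  ∀ p ∈ K, ∀ ρ > 0, ∃ᶠ r in 𝓝[>] (0 : ℝ), r ^ (-t) < coverNum (K ∩ closedBall p ρ) r

lemma IsCompact.exists_ubdLocallyGT [SecondCountableTopology X] (hE : IsCompact E) (ht : 0 ≤ t)
    (htE : t < mubd E) : ∃ K ⊆ E, IsCompact K ∧ K.Nonempty ∧ UbdLocallyGT t K := by
  open TopologicalSpace in
  set good := {V ∈ countableBasis X | HasCompactCoverUbdLE t (E ∩ V)}
  have hgood : HasCompactCoverUbdLE t (E ∩ ⋃₀ good) := by
    rw [sUnion_eq_biUnion, inter_iUnion₂]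
    exact hasCompactCoverUbdLE_biUnion ((countable_countableBasis X).mono (sep_subset _ _)) ht
      fun V hV => hV.2
  have hK : IsCompact (E \ ⋃₀ good) :=
    hE.diff (isOpen_sUnion fun V hV => isOpen_of_mem_countableBasis hV.1)
  refine ⟨E \ ⋃₀ good, sdiff_subset, hK, ?_, fun p hp ρ hρ => ?_⟩
  · rw [nonempty_iff_ne_empty, Ne, sdiff_eq_empty]
    exact fun hE' => htE.not_ge (mubd_le (hgood.mono (subset_inter subset_rfl hE')))
  obtain ⟨V, hV, hpV, hVρ⟩ := (isBasis_countableBasis X).exists_subset_of_mem_open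
    (mem_ball_self hρ) isOpen_ball
  have hAK : closure ((E \ ⋃₀ good) ∩ V) ⊆ (E \ ⋃₀ good) ∩ closedBall p ρ :=
    closure_minimal (inter_subset_inter_right _ (hVρ.trans ball_subset_closedBall))
      (hK.isClosed.inter isClosed_closedBall)
  have hA : IsCompact (closure ((E \ ⋃₀ good) ∩ V)) :=
    (hK.inter_right isClosed_closedBall).of_isClosed_subset isClosed_closure hAK
  have hubd : t < ubd (closure ((E \ ⋃₀ good) ∩ V)) := by
    by_contra! hle
    refine hp.2 ⟨V, ⟨hV, ((hA.hasCompactCoverUbdLE hle).union hgood).mono ?_⟩, hpV⟩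
    rintro x ⟨hxE, hxV⟩
    by_cases hx : x ∈ ⋃₀ good
    · exact Or.inr ⟨hxE, hx⟩
    · exact Or.inl (subset_closure ⟨⟨hxE, hx⟩, hxV⟩)
  refine ((frequently_rpow_neg_lt_coverNum ht hubd).and_eventually self_mem_nhdsWithin).mono
    fun r ⟨hr, hr0⟩ => hr.trans_le ?_
  exact_mod_cast coverNum_mono hAK (hK.inter_right isClosed_closedBall) hr0

end Kernel

/-- A cell of the Cantor-type construction: a ball of `K`, together with the subinterval
`[left, right)` of `[0, 1)` whose length is the mass the final measure puts near that ball. -/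
structure Cell (X : Type*) where
  center : X
  radius : ℝ
  left : ℝ
  right : ℝ

namespace Cell

def interval {X : Type*} (c : Cell X) : Set ℝ := Ico c.left c.right

structure IsAdmissible {X : Type*} (K : Set X) (s : ℝ) (c : Cell X) : Prop where
  center_mem : c.center ∈ K
  radius_pos : 0 < c.radius
  left_lt_right : c.left < c.right
  length_le : c.right - c.left ≤ c.radius ^ s

variable {X : Type*} [MetricSpace X] {c c' c₁ c₂ c₁' c₂' : Cell X}

def Apart (c₁ c₂ : Cell X) : Prop :=
  4 * c₁.radius + 4 * c₂.radius < dist c₁.center c₂.center ∧ Disjoint c₁.interval c₂.interval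

instance : Std.Symm (Apart (X := X)) :=
  ⟨fun _ _ h => ⟨by rw [dist_comm]; linarith [h.1], h.2.symm⟩⟩

def IsChild (c' c : Cell X) : Prop :=
  c'.radius ≤ c.radius / 2 ∧ dist c'.center c.center ≤ c.radius / 4 ∧ c'.interval ⊆ c.interval

lemma IsChild.closedBall_subset (h : c'.IsChild c) :
    closedBall c'.center (c'.radius / 2) ⊆ closedBall c.center (c.radius / 2) :=
  closedBall_subset_closedBall' (by linarith [h.1, h.2.1])

lemma Apart.of_isChild (h : Apart c₁ c₂) (h₁ : c₁'.IsChild c₁) (h₂ : c₂'.IsChild c₂)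
    (hr₁ : 0 ≤ c₁'.radius) (hr₂ : 0 ≤ c₂'.radius) : Apart c₁' c₂' := by
  refine ⟨?_, h.2.mono h₁.2.2 h₂.2.2⟩
  have := dist_triangle4 c₁.center c₁'.center c₂'.center c₂.center
  rw [dist_comm c₁.center c₁'.center] at this
  linarith [h.1, h₁.1, h₁.2.1, h₂.1, h₂.2.1]

end Cell

open Cell

section CellAt

variable {X : Type*} {d c : Cell X} {G : List (Cell X)} {u : ℝ}

noncomputable def cellAt (d : Cell X) : List (Cell X) → ℝ → Cell X
  | [], _ => d
  | c :: G, u => open Classical in if u ∈ c.interval then c else cellAt d G u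

lemma cellAt_spec (hc : c ∈ G) (hu : u ∈ c.interval) :
    cellAt d G u ∈ G ∧ u ∈ (cellAt d G u).interval := by
  induction G with
  | nil => simp at hc
  | cons c₀ G ih =>
    simp only [cellAt]
    split_ifs with h
    · exact ⟨List.mem_cons_self, h⟩
    · rcases List.mem_cons.mp hc with rfl | hc
      · exact absurd hu h
      · exact (ih hc).imp (List.mem_cons_of_mem _) id

lemma cellAt_eq_default (h : ∀ c ∈ G, u ∉ c.interval) : cellAt d G u = d := by
  induction G with
  | nil => rfl
  | cons c₀ G ih =>
    simp only [cellAt, if_neg (h c₀ List.mem_cons_self)]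
    exact ih fun c hc => h c (List.mem_cons_of_mem _ hc)

lemma cellAt_eq [MetricSpace X] (hG : G.Pairwise Apart) (hc : c ∈ G) (hu : u ∈ c.interval) :
    cellAt d G u = c := by
  obtain ⟨hmem, hu'⟩ := cellAt_spec (d := d) hc hu
  by_contra hne
  exact Set.disjoint_left.mp (hG.forall hmem hc hne).2 hu' hu

lemma measurable_center_cellAt [MeasurableSpace X] (d : Cell X) (G : List (Cell X)) :
    Measurable fun u => (cellAt d G u).center := by
  induction G with
  | nil => simpa only [cellAt] using measurable_const
  | cons c G ih =>
    simp only [cellAt, apply_ite]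
    exact Measurable.ite measurableSet_Ico measurable_const ih

end CellAt

namespace Cell

variable {X : Type*} {c c' : Cell X} {L : List X} {ρ : ℝ} {n j : ℕ}

noncomputable def node (c : Cell X) (n j : ℕ) : ℝ := c.left + j * ((c.right - c.left) / n)

noncomputable def subdivide (c : Cell X) (L : List X) (ρ : ℝ) : List (Cell X) :=
  List.ofFn fun j : Fin L.length => ⟨L.get j, ρ, c.node L.length j, c.node L.length (j + 1)⟩

lemma node_zero : c.node n 0 = c.left := by simp [node]

lemma node_self (hn : n ≠ 0) : c.node n n = c.right := by
  rw [node, mul_div_cancel₀ _ (Nat.cast_ne_zero.mpr hn : (n : ℝ) ≠ 0)]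
  abel

lemma monotone_node (hc : c.left ≤ c.right) : Monotone (c.node n) := fun i j hij => by
  have : 0 ≤ (c.right - c.left) / n := div_nonneg (sub_nonneg.mpr hc) n.cast_nonneg
  unfold node
  gcongr

lemma center_mem_radius_eq_of_mem_subdivide (hc' : c' ∈ c.subdivide L ρ) :
    c'.center ∈ L ∧ c'.radius = ρ := by
  obtain ⟨j, rfl⟩ := List.mem_ofFn.mp hc'
  exact ⟨L.get_mem j, rfl⟩

lemma length_eq_of_mem_subdivide (hc' : c' ∈ c.subdivide L ρ) :
    c'.right - c'.left = (c.right - c.left) / L.length := by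
  obtain ⟨j, rfl⟩ := List.mem_ofFn.mp hc'
  simp only [node]
  push_cast
  ring

lemma left_lt_right_of_mem_subdivide (hc : c.left < c.right) (hc' : c' ∈ c.subdivide L ρ) :
    c'.left < c'.right := by
  have hL : 0 < L.length := by
    obtain ⟨j, -⟩ := List.mem_ofFn.mp hc'
    exact j.pos
  have := length_eq_of_mem_subdivide hc'
  have : 0 < (c.right - c.left) / L.length := by
    have := sub_pos.mpr hc
    positivity
  linarith

lemma length_lt_rpow_of_mem_subdivide {r t : ℝ} (hr : 0 < r) (hc : c.right - c.left ≤ 1)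
    (hL : r ^ (-t) < L.length) (hc' : c' ∈ c.subdivide L ρ) : c'.right - c'.left < r ^ t := by
  have hL_pos : (0 : ℝ) < L.length := (Real.rpow_pos_of_pos hr _).trans hL
  rw [length_eq_of_mem_subdivide hc']
  calc (c.right - c.left) / L.length ≤ (L.length : ℝ)⁻¹ := by
        rw [div_eq_mul_inv]
        exact mul_le_of_le_one_left (by positivity) hc
    _ < r ^ t := (inv_lt_comm₀ (Real.rpow_pos_of_pos hr t) hL_pos).mp
        (by rwa [← Real.rpow_neg hr.le])

lemma interval_subset_of_mem_subdivide (hc : c.left ≤ c.right) (hc' : c' ∈ c.subdivide L ρ) :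
    c'.interval ⊆ c.interval := by
  obtain ⟨j, rfl⟩ := List.mem_ofFn.mp hc'
  refine Ico_subset_Ico ?_ ?_
  · exact node_zero (c := c) ▸ monotone_node hc (Nat.zero_le _)
  · exact node_self (c := c) j.pos.ne' ▸ monotone_node hc (Nat.succ_le_of_lt j.isLt)

lemma interval_subset_biUnion_subdivide (hL : L ≠ []) :
    c.interval ⊆ ⋃ c' ∈ c.subdivide L ρ, c'.interval := by
  intro u hu
  have hcover := Ico_subset_biUnion_Ico L.length (c.node L.length)
  rw [node_zero, node_self (List.length_pos_iff.mpr hL).ne'] at hcover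
  obtain ⟨j, hj, huj⟩ := mem_iUnion₂.mp (hcover hu)
  exact mem_iUnion₂.mpr ⟨_, List.mem_ofFn.mpr ⟨⟨j, Finset.mem_range.mp hj⟩, rfl⟩, huj⟩

lemma pairwise_apart_subdivide [MetricSpace X] (hc : c.left ≤ c.right)
    (hL : L.Pairwise fun p q => 8 * ρ < dist p q) : (c.subdivide L ρ).Pairwise Apart := by
  refine List.pairwise_ofFn.mpr fun i j hij => ⟨?_, ?_⟩
  · linarith [List.pairwise_iff_get.mp hL i j hij]
  · have := (monotone_node (n := L.length) hc).pairwise_disjoint_on_Ico_succ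
      (Fin.val_ne_of_ne hij.ne)
    simp only [Function.onFun, Order.succ_eq_add_one] at this
    exact this

end Cell

lemma eventually_rpow_le_div_rpow {s t : ℝ} (hst : s < t) {C : ℝ} (hC : 0 < C) :
    ∀ᶠ r in 𝓝[>] (0 : ℝ), r ^ t ≤ (r / C) ^ s := by
  have hts : 0 < t - s := sub_pos.mpr hst
  have hlim : Tendsto (fun r : ℝ => r ^ (t - s)) (𝓝[>] 0) (𝓝 0) := by
    simpa [Real.zero_rpow hts.ne'] using
      ((Real.continuous_rpow_const hts.le).tendsto 0).mono_left nhdsWithin_le_nhds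
  filter_upwards [hlim.eventually (gt_mem_nhds (inv_pos.mpr (Real.rpow_pos_of_pos hC s))),
    self_mem_nhdsWithin] with r hr (hr0 : 0 < r)
  calc r ^ t = r ^ (t - s) * r ^ s := by rw [← Real.rpow_add hr0]; ring_nf
    _ ≤ (C ^ s)⁻¹ * r ^ s := by gcongr
    _ = (r / C) ^ s := by rw [Real.div_rpow hr0.le hC.le]; ring

section Generations

variable {X : Type*} [MetricSpace X] {K : Set X} {s t : ℝ} {k : ℕ} {c : Cell X}
  {G : List (Cell X)}

def IsSubdivision (K : Set X) (s : ℝ) (c : Cell X) (cs : List (Cell X)) : Prop :=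
  (∀ c' ∈ cs, c'.IsAdmissible K s ∧ c'.IsChild c) ∧ c.interval ⊆ ⋃ c' ∈ cs, c'.interval ∧
    cs.Pairwise Apart

lemma exists_subdivision (hK : IsCompact K) (hKt : UbdLocallyGT t K) (hst : s < t)
    (hc : c.IsAdmissible K s) (hcI : c.interval ⊆ Ico 0 1) : ∃ cs, IsSubdivision K s c cs := by
  have hρ := hc.radius_pos
  have hsmall : ∀ᶠ r in 𝓝[>] (0 : ℝ), r ∈ Ioo 0 (9 * c.radius) ∧ r ^ t ≤ (r / 18) ^ s :=
    Eventually.and (Ioo_mem_nhdsGT (by positivity)) (eventually_rpow_le_div_rpow hst (by norm_num))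
  obtain ⟨r, hrN, ⟨hr0, hrρ⟩, hrs⟩ :=
    ((hKt c.center hc.center_mem (c.radius / 4) (by positivity)).and_eventually hsmall).exists
  obtain ⟨P, hPA, hPsep, hPcard⟩ :=
    (hK.inter_right isClosed_closedBall).exists_isSeparated_coverNum_le
      (ε := (r / 2).toNNReal) (by simpa using hr0)
  rw [Real.coe_toNNReal _ (by positivity), mul_div_cancel₀ r two_ne_zero] at hPcard
  have hlen : r ^ (-t) < P.toList.length := by
    rw [Finset.length_toList]
    exact hrN.trans_le (by exact_mod_cast hPcard)
  have hL : P.toList ≠ [] :=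
    List.length_pos_iff.mp (by exact_mod_cast (Real.rpow_pos_of_pos hr0 _).trans hlen)
  -- The radius `r / 18` makes the children `Apart` (`8 * (r / 18) < r / 2`), and `r < 9 * c.radius`
  -- makes it at most half the parent's.
  refine ⟨c.subdivide P.toList (r / 18), fun c' hc' => ?_,
    c.interval_subset_biUnion_subdivide hL, c.pairwise_apart_subdivide hc.left_lt_right.le ?_⟩
  · obtain ⟨hcenter, hradius⟩ := center_mem_radius_eq_of_mem_subdivide hc'
    have hcA := hPA (Finset.mem_toList.mp hcenter)
    refine ⟨⟨hcA.1, by rw [hradius]; positivity,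
      left_lt_right_of_mem_subdivide hc.left_lt_right hc', ?_⟩,
      by rw [hradius]; linarith, mem_closedBall.mp hcA.2,
      interval_subset_of_mem_subdivide hc.left_lt_right.le hc'⟩
    have h01 := (Ico_subset_Ico_iff hc.left_lt_right).mp hcI
    rw [hradius]
    exact (length_lt_rpow_of_mem_subdivide hr0 (by linarith) hlen hc').le.trans hrs
  · refine (Finset.nodup_toList P).pairwise_of_forall_ne fun p hp q hq hpq => ?_
    have hpq : _ < edist p q := hPsep (Finset.mem_toList.mp hp) (Finset.mem_toList.mp hq) hpq
    rw [edist_dist] at hpq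
    have := (ENNReal.ofReal_lt_ofReal_iff_of_nonneg (by positivity)).mp hpq
    linarith

structure IsGeneration (K : Set X) (s : ℝ) (k : ℕ) (G : List (Cell X)) : Prop where
  admissible : ∀ c ∈ G, c.IsAdmissible K s
  radius_le : ∀ c ∈ G, c.radius ≤ (1 / 2) ^ k
  interval_subset : ∀ c ∈ G, c.interval ⊆ Ico 0 1
  cover : Ico 0 1 ⊆ ⋃ c ∈ G, c.interval
  pairwise_apart : G.Pairwise Apart

lemma isGeneration_zero_singleton {p : X} (hp : p ∈ K) :
    IsGeneration K s 0 [⟨p, 1, 0, 1⟩] where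
  admissible := by
    simp only [List.mem_singleton, forall_eq]
    exact ⟨hp, one_pos, one_pos, by norm_num⟩
  radius_le := by simp
  interval_subset := by simp [Cell.interval]
  cover := by simp [Cell.interval]
  pairwise_apart := List.pairwise_singleton _ _

lemma IsGeneration.exists_refinement (hK : IsCompact K) (hKt : UbdLocallyGT t K) (hst : s < t)
    (hG : IsGeneration K s k G) :
    ∃ G', IsGeneration K s (k + 1) G' ∧ ∀ c' ∈ G', ∃ c ∈ G, c'.IsChild c := by
  choose! f hf using fun c (hc : c ∈ G) =>
    exists_subdivision hK hKt hst (hG.admissible c hc) (hG.interval_subset c hc)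
  have hchild : ∀ c' ∈ G.flatMap f, ∃ c ∈ G, c'.IsAdmissible K s ∧ c'.IsChild c := by
    intro c' hc'
    obtain ⟨c, hc, hc'c⟩ := List.mem_flatMap.mp hc'
    exact ⟨c, hc, (hf c hc).1 c' hc'c⟩
  refine ⟨G.flatMap f, ⟨fun c' hc' => ?_, fun c' hc' => ?_, fun c' hc' => ?_, ?_, ?_⟩,
    fun c' hc' => ?_⟩
  · obtain ⟨c, -, hadm, -⟩ := hchild c' hc'
    exact hadm
  · obtain ⟨c, hc, -, hrad, -⟩ := hchild c' hc'
    rw [pow_succ]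
    linarith [hG.radius_le c hc]
  · obtain ⟨c, hc, -, -, -, hsub⟩ := hchild c' hc'
    exact hsub.trans (hG.interval_subset c hc)
  · intro u hu
    obtain ⟨c, hc, huc⟩ := mem_iUnion₂.mp (hG.cover hu)
    obtain ⟨c', hc', huc'⟩ := mem_iUnion₂.mp ((hf c hc).2.1 huc)
    exact mem_iUnion₂.mpr ⟨c', List.mem_flatMap.mpr ⟨c, hc, hc'⟩, huc'⟩
  · refine List.pairwise_flatMap.mpr ⟨fun c hc => (hf c hc).2.2, ?_⟩
    refine hG.pairwise_apart.imp_of_mem fun hc₁ hc₂ happ c₁' hc₁' c₂' hc₂' => ?_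
    obtain ⟨hadm₁, hchild₁⟩ := (hf _ hc₁).1 c₁' hc₁'
    obtain ⟨hadm₂, hchild₂⟩ := (hf _ hc₂).1 c₂' hc₂'
    exact happ.of_isChild hchild₁ hchild₂ hadm₁.radius_pos.le hadm₂.radius_pos.le
  · obtain ⟨c, hc, -, hc'c⟩ := hchild c' hc'
    exact ⟨c, hc, hc'c⟩

end Generations

lemma msupport_subset_of_measure_compl_eq_zero {X : Type*} [TopologicalSpace X]
    [MeasurableSpace X] {μ : Measure X} {K : Set X} (hK : IsClosed K) (h : μ Kᶜ = 0) :
    msupport μ ⊆ K :=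
  fun _ hx => by_contra fun hxK => hx Kᶜ hK.isOpen_compl hxK h

structure CellScheme {X : Type*} [MetricSpace X] (K : Set X) (s : ℝ) where
  gen : ℕ → List (Cell X)
  /-- the cell assigned to parameters outside `[0, 1)` -/
  root : Cell X
  root_center_mem : root.center ∈ K
  isGeneration : ∀ k, IsGeneration K s k (gen k)
  refines : ∀ k, ∀ c' ∈ gen (k + 1), ∃ c ∈ gen k, c'.IsChild c

lemma exists_cellScheme {X : Type*} [MetricSpace X] {K : Set X} {s t : ℝ} {p : X}
    (hK : IsCompact K) (hKt : UbdLocallyGT t K) (hst : s < t) (hp : p ∈ K) :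
    Nonempty (CellScheme K s) := by
  choose! next hnext using fun k (G : List (Cell X)) (hG : IsGeneration K s k G) =>
    hG.exists_refinement hK hKt hst
  let gen : ℕ → List (Cell X) := fun k => Nat.rec [⟨p, 1, 0, 1⟩] next k
  have hgen : ∀ k, IsGeneration K s k (gen k) := fun k =>
    Nat.rec (isGeneration_zero_singleton hp) (fun k hk => (hnext k _ hk).1) k
  exact ⟨⟨gen, ⟨p, 1, 0, 1⟩, hp, hgen, fun k => (hnext k _ (hgen k)).2⟩⟩

namespace CellScheme

variable {X : Type*} [MetricSpace X] {K : Set X} {s : ℝ} (S : CellScheme K s)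
  {k n : ℕ} {u : ℝ} {c : Cell X}

noncomputable def cell (k : ℕ) (u : ℝ) : Cell X := cellAt S.root (S.gen k) u

lemma cell_spec (hu : u ∈ Ico 0 1) : S.cell k u ∈ S.gen k ∧ u ∈ (S.cell k u).interval :=
  let ⟨_, hc, huc⟩ := mem_iUnion₂.mp ((S.isGeneration k).cover hu)
  cellAt_spec hc huc

lemma cell_eq_root (hu : u ∉ Ico 0 1) : S.cell k u = S.root :=
  cellAt_eq_default fun c hc huc => hu ((S.isGeneration k).interval_subset c hc huc)

lemma cell_eq (hc : c ∈ S.gen k) (hu : u ∈ c.interval) : S.cell k u = c :=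
  cellAt_eq (S.isGeneration k).pairwise_apart hc hu

lemma center_cell_mem (k : ℕ) (u : ℝ) : (S.cell k u).center ∈ K := by
  by_cases hu : u ∈ Ico 0 1
  · exact ((S.isGeneration k).admissible _ (S.cell_spec hu).1).center_mem
  · exact S.cell_eq_root hu ▸ S.root_center_mem

lemma radius_cell_pos (hu : u ∈ Ico 0 1) : 0 < (S.cell k u).radius :=
  ((S.isGeneration k).admissible _ (S.cell_spec hu).1).radius_pos

lemma radius_cell_le (hu : u ∈ Ico 0 1) : (S.cell k u).radius ≤ (1 / 2) ^ k :=
  (S.isGeneration k).radius_le _ (S.cell_spec hu).1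

lemma cell_succ_isChild (hu : u ∈ Ico 0 1) : (S.cell (k + 1) u).IsChild (S.cell k u) := by
  obtain ⟨hmem, hu'⟩ := S.cell_spec (k := k + 1) hu
  obtain ⟨c, hc, hchild⟩ := S.refines k _ hmem
  rwa [S.cell_eq hc (hchild.2.2 hu')]

lemma antitone_closedBall_cell (hu : u ∈ Ico 0 1) :
    Antitone fun k => closedBall (S.cell k u).center ((S.cell k u).radius / 2) :=
  antitone_nat_of_succ_le fun _ => (S.cell_succ_isChild hu).closedBall_subset

lemma center_cell_mem_closedBall (hu : u ∈ Ico 0 1) (hkn : k ≤ n) :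
    (S.cell n u).center ∈ closedBall (S.cell k u).center ((S.cell k u).radius / 2) :=
  S.antitone_closedBall_cell hu hkn
    (mem_closedBall_self (by linarith [S.radius_cell_pos (k := n) hu]))

lemma dist_center_cell_le (u : ℝ) (hkn : k ≤ n) :
    dist (S.cell k u).center (S.cell n u).center ≤ (1 / 2) ^ k / 2 := by
  by_cases hu : u ∈ Ico 0 1
  · rw [dist_comm]
    linarith [mem_closedBall.mp (S.center_cell_mem_closedBall hu hkn), S.radius_cell_le (k := k) hu]
  · simp only [S.cell_eq_root hu, dist_self]
    positivity

noncomputable def limitMap (u : ℝ) : X :=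
  haveI : Nonempty X := ⟨S.root.center⟩
  limUnder atTop fun k => (S.cell k u).center

lemma tendsto_limitMap (hK : IsCompact K) (u : ℝ) :
    Tendsto (fun k => (S.cell k u).center) atTop (𝓝 (S.limitMap u)) := by
  have hcauchy : CauchySeq fun k => (S.cell k u).center :=
    cauchySeq_of_le_tendsto_0' (fun k => (1 / 2 : ℝ) ^ k / 2) (fun _ _ => S.dist_center_cell_le u)
      (by simpa using (tendsto_pow_atTop_nhds_zero_of_lt_one (by norm_num : (0 : ℝ) ≤ 1 / 2)
        (by norm_num)).div_const 2)
  obtain ⟨x, -, hx⟩ :=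
    cauchySeq_tendsto_of_isComplete hK.isComplete (fun k => S.center_cell_mem k u) hcauchy
  exact tendsto_nhds_limUnder ⟨x, hx⟩

lemma limitMap_mem (hK : IsCompact K) (u : ℝ) : S.limitMap u ∈ K :=
  hK.isClosed.mem_of_tendsto (S.tendsto_limitMap hK u) (.of_forall fun k => S.center_cell_mem k u)

lemma dist_limitMap_le (hK : IsCompact K) (hu : u ∈ Ico 0 1) (k : ℕ) :
    dist (S.limitMap u) (S.cell k u).center ≤ (S.cell k u).radius / 2 :=
  isClosed_closedBall.mem_of_tendsto (S.tendsto_limitMap hK u)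
    (eventually_atTop.mpr ⟨k, fun _ => S.center_cell_mem_closedBall hu⟩)

lemma cell_eq_of_dist_le (hK : IsCompact K) {x : X} (hc : c ∈ S.gen k)
    (hx : dist x c.center ≤ 2 * c.radius) (hu : u ∈ Ico 0 1)
    (hux : dist (S.limitMap u) x ≤ c.radius) : S.cell k u = c := by
  obtain ⟨hmem, -⟩ := S.cell_spec (k := k) hu
  by_contra hne
  have happ := (S.isGeneration k).pairwise_apart.forall hmem hc hne
  have := dist_triangle4 (S.cell k u).center (S.limitMap u) x c.center
  rw [dist_comm (S.cell k u).center (S.limitMap u)] at this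
  linarith [happ.1, S.dist_limitMap_le hK hu k, S.radius_cell_pos (k := k) hu,
    ((S.isGeneration k).admissible c hc).radius_pos]

variable [MeasurableSpace X] [BorelSpace X]

lemma measurable_limitMap (hK : IsCompact K) : Measurable S.limitMap :=
  measurable_of_tendsto_metrizable (fun k => measurable_center_cellAt S.root (S.gen k))
    (tendsto_pi_nhds.mpr (S.tendsto_limitMap hK))

noncomputable def measure : Measure X := (volume.restrict (Ico (0 : ℝ) 1)).map S.limitMap

lemma measure_apply (hK : IsCompact K) {B : Set X} (hB : MeasurableSet B) :
    S.measure B = volume (S.limitMap ⁻¹' B ∩ Ico 0 1) := by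
  rw [measure, Measure.map_apply (S.measurable_limitMap hK) hB,
    Measure.restrict_apply (S.measurable_limitMap hK hB)]

lemma isProbabilityMeasure_measure (hK : IsCompact K) : IsProbabilityMeasure S.measure :=
  ⟨by simp [S.measure_apply hK MeasurableSet.univ]⟩

lemma msupport_measure_subset (hK : IsCompact K) : msupport S.measure ⊆ K :=
  msupport_subset_of_measure_compl_eq_zero hK.isClosed (by
    have hpre : S.limitMap ⁻¹' K = univ := eq_univ_of_forall (S.limitMap_mem hK)
    rw [S.measure_apply hK hK.isClosed.measurableSet.compl, preimage_compl, hpre, compl_univ,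
      empty_inter, measure_empty])

lemma measure_closedBall_le (hK : IsCompact K) {x : X} (hc : c ∈ S.gen k)
    (hx : dist x c.center ≤ 2 * c.radius) :
    S.measure (closedBall x c.radius) ≤ ENNReal.ofReal (c.radius ^ s) := by
  rw [S.measure_apply hK measurableSet_closedBall]
  calc volume (S.limitMap ⁻¹' closedBall x c.radius ∩ Ico 0 1) ≤ volume c.interval :=
        measure_mono fun u ⟨hux, hu⟩ =>
          S.cell_eq_of_dist_le hK hc hx hu hux ▸ (S.cell_spec hu).2
    _ = ENNReal.ofReal (c.right - c.left) := Real.volume_Ico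
    _ ≤ ENNReal.ofReal (c.radius ^ s) :=
        ENNReal.ofReal_le_ofReal ((S.isGeneration k).admissible c hc).length_le

lemma measure_closedBall_eq_zero (hK : IsCompact K) {x : X} {r : ℝ}
    (hfar : ∀ c ∈ S.gen k, 2 * c.radius < dist x c.center) (hr : ∀ c ∈ S.gen k, r ≤ c.radius) :
    S.measure (closedBall x r) = 0 := by
  rw [S.measure_apply hK measurableSet_closedBall]
  refine measure_mono_null (fun u ⟨hgu, hu⟩ => ?_) (measure_empty (μ := volume))
  obtain ⟨hmem, -⟩ := S.cell_spec (k := k) hu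
  have := dist_triangle x (S.limitMap u) (S.cell k u).center
  rw [dist_comm x (S.limitMap u)] at this
  linarith [hfar _ hmem, hr _ hmem, S.dist_limitMap_le hK hu k, mem_closedBall.mp hgu,
    S.radius_cell_pos (k := k) hu]

lemma exists_measure_closedBall_le (hK : IsCompact K) (x : X) {ε : ℝ} (hε : 0 < ε) :
    ∃ r, 0 < r ∧ r < ε ∧ S.measure (closedBall x r) ≤ ENNReal.ofReal (r ^ s) := by
  obtain ⟨k, hk⟩ := exists_pow_lt_of_lt_one hε one_half_lt_one
  by_cases hnear : ∃ c ∈ S.gen k, dist x c.center ≤ 2 * c.radius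
  · obtain ⟨c, hc, hx⟩ := hnear
    exact ⟨c.radius, ((S.isGeneration k).admissible c hc).radius_pos,
      ((S.isGeneration k).radius_le c hc).trans_lt hk, S.measure_closedBall_le hK hc hx⟩
  push Not at hnear
  have hsmall : ∀ᶠ r in 𝓝[>] (0 : ℝ), r ∈ Ioo 0 ε ∧ ∀ c ∈ S.gen k, r ≤ c.radius :=
    Eventually.and (Ioo_mem_nhdsGT hε) ((S.gen k).finite_toSet.eventually_all.mpr fun c hc =>
      mem_of_superset (Ioo_mem_nhdsGT ((S.isGeneration k).admissible c hc).radius_pos)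
        fun _ hr => hr.2.le)
  obtain ⟨r, ⟨hr0, hrε⟩, hr⟩ := hsmall.exists
  exact ⟨r, hr0, hrε, (S.measure_closedBall_eq_zero hK hnear hr).trans_le zero_le⟩

end CellScheme

theorem stmt7_general {d : ℕ} (E : Set (EuclideanSpace ℝ (Fin d)))
    (hc : IsCompact E) (s : ℝ) (hs : 0 ≤ s) (hlt : s < mubd E) :
    ∃ μ ∈ probOn E, ∀ x : EuclideanSpace ℝ (Fin d), ∀ ε : ℝ, 0 < ε →
      ∃ r : ℝ, 0 < r ∧ r < ε ∧ μ (closedBall x r) ≤ ENNReal.ofReal (r ^ s) := by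
  obtain ⟨t, hst, htE⟩ := exists_between hlt
  obtain ⟨K, hKE, hK, ⟨p, hp⟩, hKt⟩ := hc.exists_ubdLocallyGT (hs.trans hst.le) htE
  obtain ⟨S⟩ := exists_cellScheme hK hKt hst hp
  exact ⟨S.measure, ⟨S.isProbabilityMeasure_measure hK, (S.msupport_measure_subset hK).trans hKE⟩,
    fun x _ hε => S.exists_measure_closedBall_le hK x hε⟩

theorem stmt7 {d : ℕ} (E : Set (EuclideanSpace ℝ (Fin d)))
    (hc : IsCompact E) (hne : E.Nonempty) (s : ℝ) (hs : 0 ≤ s) (hlt : s < mubd E) :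
    ∃ μ ∈ probOn E, ∀ x : EuclideanSpace ℝ (Fin d), ∀ ε : ℝ, 0 < ε →
      ∃ r : ℝ, 0 < r ∧ r < ε ∧ μ (closedBall x r) ≤ ENNReal.ofReal (r ^ s) :=
  stmt7_general E hc s hs hlt
end
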